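/- arXiv:q-alg/9712030 — 5 statements merged into one kernel-verified Lean document; each statement's English description precedes it below -/
import Mathlib

section
/- If δ is a unit in R, then the BMW algebra BA_n(R) is isomorphic to the algebra generated by invertible elements X_1,…,X_{n−1} subject only to the braid relations, X_ie_i = e_iX_i = λe_i, and e_iX_j^{±1}e_i = λ^{∓1}e_i for |i−j|=1, where e_i is defined as e_i := 1 − (X_i − X_i^{-1})/δ. In particular, with this definition of e_i, the relations e_i^2 = x·e_i, e_ie_j = e_je_i for |i−j|>1, e_iX_j^{±1}X_i^{±1} = X_j^{±1}X_i^{±1}e_j for |i−j|=1, and e_ie_je_i = e_i for |i−j|=1 all hold. -/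
/-- Generators of the type-A Birman–Murakami–Wenzl algebra `BA_n`. -/
inductive BAGen where
  | X (i : ℕ)
  | Xinv (i : ℕ)
  | e (i : ℕ)

namespace BAGen

variable (R : Type) [CommRing R]

/-- The canonical image of a generator in the free algebra. -/
noncomputable abbrev g (a : BAGen) : FreeAlgebra R BAGen := FreeAlgebra.ι R a

/-- The defining relations of the Birman–Murakami–Wenzl algebra `BA_n(R)` with
parameters `x, λ, λ⁻¹, δ`. -/
inductive BARel (n : ℕ) (x lam laminv δ : R) :
    FreeAlgebra R BAGen → FreeAlgebra R BAGen → Prop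
  | X_Xinv : ∀ i, 1 ≤ i → i ≤ n - 1 → BARel n x lam laminv δ (g R (X i) * g R (Xinv i)) 1
  | Xinv_X : ∀ i, 1 ≤ i → i ≤ n - 1 → BARel n x lam laminv δ (g R (Xinv i) * g R (X i)) 1
  | Xcomm : ∀ i j, 1 ≤ i → i ≤ n - 1 → 1 ≤ j → j ≤ n - 1 → 1 < Nat.dist i j →
      BARel n x lam laminv δ (g R (X i) * g R (X j)) (g R (X j) * g R (X i))
  | braid : ∀ i j, 1 ≤ i → i ≤ n - 1 → 1 ≤ j → j ≤ n - 1 → Nat.dist i j = 1 →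
      BARel n x lam laminv δ (g R (X i) * g R (X j) * g R (X i))
        (g R (X j) * g R (X i) * g R (X j))
  | Xe : ∀ i, 1 ≤ i → i ≤ n - 1 →
      BARel n x lam laminv δ (g R (X i) * g R (e i)) (lam • g R (e i))
  | eX : ∀ i, 1 ≤ i → i ≤ n - 1 →
      BARel n x lam laminv δ (g R (e i) * g R (X i)) (lam • g R (e i))
  | eXe : ∀ i j, 1 ≤ i → i ≤ n - 1 → 1 ≤ j → j ≤ n - 1 → Nat.dist i j = 1 →
      BARel n x lam laminv δ (g R (e i) * g R (X j) * g R (e i)) (laminv • g R (e i))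
  | eXinve : ∀ i j, 1 ≤ i → i ≤ n - 1 → 1 ≤ j → j ≤ n - 1 → Nat.dist i j = 1 →
      BARel n x lam laminv δ (g R (e i) * g R (Xinv j) * g R (e i)) (lam • g R (e i))
  | ee : ∀ i, 1 ≤ i → i ≤ n - 1 →
      BARel n x lam laminv δ (g R (e i) * g R (e i)) (x • g R (e i))
  | Xinv_eq : ∀ i, 1 ≤ i → i ≤ n - 1 →
      BARel n x lam laminv δ (g R (Xinv i)) (g R (X i) - δ • 1 + δ • g R (e i))
  | ecomm : ∀ i j, 1 ≤ i → i ≤ n - 1 → 1 ≤ j → j ≤ n - 1 → 1 < Nat.dist i j →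
      BARel n x lam laminv δ (g R (e i) * g R (e j)) (g R (e j) * g R (e i))
  | eXX : ∀ i j, 1 ≤ i → i ≤ n - 1 → 1 ≤ j → j ≤ n - 1 → Nat.dist i j = 1 →
      BARel n x lam laminv δ (g R (e i) * (g R (X j) * g R (X i)))
        (g R (X j) * g R (X i) * g R (e j))
  | eXinvXinv : ∀ i j, 1 ≤ i → i ≤ n - 1 → 1 ≤ j → j ≤ n - 1 → Nat.dist i j = 1 →
      BARel n x lam laminv δ (g R (e i) * (g R (Xinv j) * g R (Xinv i)))
        (g R (Xinv j) * g R (Xinv i) * g R (e j))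
  | eee : ∀ i j, 1 ≤ i → i ≤ n - 1 → 1 ≤ j → j ≤ n - 1 → Nat.dist i j = 1 →
      BARel n x lam laminv δ (g R (e i) * g R (e j) * g R (e i)) (g R (e i))

end BAGen

/-- The type-A Birman–Murakami–Wenzl algebra `BA_n(R)`, presented by generators
`X_i, X_i⁻¹, e_i` modulo the defining relations. -/
noncomputable def BA (R : Type) [CommRing R] (n : ℕ) (x lam laminv δ : R) : Type :=
  RingQuot (BAGen.BARel R n x lam laminv δ)

noncomputable instance {R : Type} [CommRing R] {n : ℕ} {x lam laminv δ : R} :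
    Ring (BA R n x lam laminv δ) :=
  inferInstanceAs (Ring (RingQuot _))

noncomputable instance {R : Type} [CommRing R] {n : ℕ} {x lam laminv δ : R} :
    Algebra R (BA R n x lam laminv δ) :=
  inferInstanceAs (Algebra R (RingQuot _))

/-- Generators of the reduced presentation: invertible braid generators only. -/
inductive BAredGen where
  | X (i : ℕ)
  | Xinv (i : ℕ)

namespace BAredGen

variable (R : Type) [CommRing R]

/-- The canonical image of a generator in the free algebra. -/
noncomputable abbrev g (a : BAredGen) : FreeAlgebra R BAredGen := FreeAlgebra.ι R a

/-- The element `e_i := 1 − δ⁻¹(X_i − X_i⁻¹)` of the free algebra on the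
reduced generators. -/
noncomputable def eExpr (δinv : R) (i : ℕ) : FreeAlgebra R BAredGen :=
  1 - δinv • (g R (X i) - g R (Xinv i))

/-- The reduced presentation of the BMW algebra: invertible generators `X_i`
subject only to the braid relations, `X_i e_i = e_i X_i = λ e_i` and
`e_i X_j^{±1} e_i = λ^{∓1} e_i` for `|i−j| = 1`, where
`e_i := 1 − δ⁻¹(X_i − X_i⁻¹)`. -/
inductive BAredRel (n : ℕ) (lam laminv δinv : R) :
    FreeAlgebra R BAredGen → FreeAlgebra R BAredGen → Prop
  | X_Xinv : ∀ i, 1 ≤ i → i ≤ n - 1 →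
      BAredRel n lam laminv δinv (g R (X i) * g R (Xinv i)) 1
  | Xinv_X : ∀ i, 1 ≤ i → i ≤ n - 1 →
      BAredRel n lam laminv δinv (g R (Xinv i) * g R (X i)) 1
  | Xcomm : ∀ i j, 1 ≤ i → i ≤ n - 1 → 1 ≤ j → j ≤ n - 1 → 1 < Nat.dist i j →
      BAredRel n lam laminv δinv (g R (X i) * g R (X j)) (g R (X j) * g R (X i))
  | braid : ∀ i j, 1 ≤ i → i ≤ n - 1 → 1 ≤ j → j ≤ n - 1 → Nat.dist i j = 1 →
      BAredRel n lam laminv δinv (g R (X i) * g R (X j) * g R (X i))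
        (g R (X j) * g R (X i) * g R (X j))
  | Xe : ∀ i, 1 ≤ i → i ≤ n - 1 →
      BAredRel n lam laminv δinv (g R (X i) * eExpr R δinv i) (lam • eExpr R δinv i)
  | eX : ∀ i, 1 ≤ i → i ≤ n - 1 →
      BAredRel n lam laminv δinv (eExpr R δinv i * g R (X i)) (lam • eExpr R δinv i)
  | eXe : ∀ i j, 1 ≤ i → i ≤ n - 1 → 1 ≤ j → j ≤ n - 1 → Nat.dist i j = 1 →
      BAredRel n lam laminv δinv (eExpr R δinv i * g R (X j) * eExpr R δinv i)
        (laminv • eExpr R δinv i)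
  | eXinve : ∀ i j, 1 ≤ i → i ≤ n - 1 → 1 ≤ j → j ≤ n - 1 → Nat.dist i j = 1 →
      BAredRel n lam laminv δinv (eExpr R δinv i * g R (Xinv j) * eExpr R δinv i)
        (lam • eExpr R δinv i)

end BAredGen

/-- The algebra of the reduced presentation. -/
noncomputable def BAred (R : Type) [CommRing R] (n : ℕ) (lam laminv δinv : R) : Type :=
  RingQuot (BAredGen.BAredRel R n lam laminv δinv)

noncomputable instance {R : Type} [CommRing R] {n : ℕ} {lam laminv δinv : R} :
    Ring (BAred R n lam laminv δinv) :=
  inferInstanceAs (Ring (RingQuot _))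

noncomputable instance {R : Type} [CommRing R] {n : ℕ} {lam laminv δinv : R} :
    Algebra R (BAred R n lam laminv δinv) :=
  inferInstanceAs (Algebra R (RingQuot _))

namespace BAred

variable {R : Type} [CommRing R] {n : ℕ} {lam laminv δinv : R}

/-- The image of a generator in the reduced algebra. -/
noncomputable def gen (a : BAredGen) : BAred R n lam laminv δinv :=
  RingQuot.mkAlgHom R (BAredGen.BAredRel R n lam laminv δinv) (FreeAlgebra.ι R a)

/-- The element `e_i := 1 − δ⁻¹(X_i − X_i⁻¹)` of the reduced algebra. -/
noncomputable def E (i : ℕ) : BAred R n lam laminv δinv :=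
  1 - δinv • (gen (BAredGen.X i) - gen (BAredGen.Xinv i))

end BAred

/-!
Since `δ` is a unit, the BMW relation `X_i⁻¹ = X_i − δ + δ e_i` says exactly that
`e_i = 1 − δ⁻¹(X_i − X_i⁻¹)`, so the generators `e_i` and this relation can be dropped once the
other BMW relations are shown to follow from the reduced ones. All of them are identities about
`e(u) = 1 − δ⁻¹(u − u⁻¹)` for a unit `u`: `e_i² = x e_i` comes from `X_i^{±1} e_i = λ^{±1} e_i`
and `δ⁻¹(λ − λ⁻¹) = 1 − x`; `e_i e_j = e_j e_i` because whatever commutes with `u` commutes with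
`e(u)`; `e_i X_j^{±1} X_i^{±1} = X_j^{±1} X_i^{±1} e_j` because a unit `w` with `u w = w v`
satisfies `e(u) w = w e(v)`, and the braid relation gives `u w = w v` for `w = X_j^{±1} X_i^{±1}`;
finally `e_i e_j e_i = e_i` follows by expanding `e_j` and using `e_i X_j^{±1} e_i = λ^{∓1} e_i`
together with `e_i² = x e_i`.

Both presentations also contain free generators with indices outside `1, …, n − 1`. They form
countably infinite families on both sides, which any bijection matches up.
-/

section BMWElement

variable {R A : Type*} [CommRing R] [Ring A] [Algebra R A]

noncomputable def bmwE (δinv : R) (u : Aˣ) : A := 1 - δinv • ((u : A) - ↑u⁻¹)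

variable {δinv : R}

theorem Commute.bmwE_left {u : Aˣ} {a : A} (h : Commute (u : A) a) :
    Commute (bmwE δinv u) a :=
  (Commute.one_left a).sub_left ((h.sub_left h.units_inv_left).smul_left δinv)

theorem bmwE_mul_of_mul_eq {u v w : Aˣ} (h : u * w = w * v) :
    bmwE δinv u * w = w * bmwE δinv v := by
  have h' : u⁻¹ * w = w * v⁻¹ := by
    rw [inv_mul_eq_iff_eq_mul, ← mul_assoc, h, mul_inv_cancel_right]
  have hA : ((u : A) - ↑u⁻¹) * w = w * ((v : A) - ↑v⁻¹) := by
    simp only [sub_mul, mul_sub, ← Units.val_mul, h, h']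
  simp only [bmwE, sub_mul, mul_sub, one_mul, mul_one, smul_mul_assoc, mul_smul_comm, hA]

theorem units_inv_mul_eq_smul {u : Aˣ} {a : A} {c c' : R} (hc : c * c' = 1)
    (h : (u : A) * a = c • a) : (↑u⁻¹ : A) * a = c' • a := by
  calc (↑u⁻¹ : A) * a = c' • (↑u⁻¹ * (c • a)) := by
        rw [mul_smul_comm, smul_smul, mul_comm, hc, one_smul]
    _ = c' • a := by rw [← h, ← mul_assoc, Units.inv_mul, one_mul]

variable {x lam laminv : R}

theorem bmwE_mul_self (hlam : lam * laminv = 1) (hco : δinv * (lam - laminv) = 1 - x)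
    {u : Aˣ} (h : (u : A) * bmwE δinv u = lam • bmwE δinv u) :
    bmwE δinv u * bmwE δinv u = x • bmwE δinv u := by
  have h' := units_inv_mul_eq_smul hlam h
  nth_rw 1 [bmwE]
  rw [sub_mul, smul_mul_assoc, sub_mul, h, h', one_mul, ← sub_smul,
    smul_smul, hco, sub_smul, one_smul, sub_sub_cancel]

theorem mul_bmwE_mul_self (hco : δinv * (lam - laminv) = 1 - x) {a : A} {v : Aˣ}
    (hsq : a * a = x • a) (hv : a * v * a = laminv • a) (hv' : a * ↑v⁻¹ * a = lam • a) :
    a * bmwE δinv v * a = a := by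
  have hcoeff : x - δinv * (laminv - lam) = 1 := by linear_combination hco
  rw [bmwE, mul_sub, mul_one, mul_smul_comm, mul_sub, sub_mul, smul_mul_assoc, sub_mul, hsq, hv,
    hv', ← sub_smul, smul_smul, ← sub_smul, hcoeff, one_smul]

end BMWElement

theorem mul_inv_mul_inv_of_braid {G : Type*} [Group G] {a b : G} (h : a * b * a = b * a * b) :
    a * (b⁻¹ * a⁻¹) = b⁻¹ * a⁻¹ * b := by
  have h' : a⁻¹ * b⁻¹ * a⁻¹ = b⁻¹ * a⁻¹ * b⁻¹ := by
    simpa only [mul_inv_rev, mul_assoc] using congrArg (·⁻¹) h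
  calc a * (b⁻¹ * a⁻¹) = a * (b⁻¹ * a⁻¹ * b⁻¹) * b := by group
    _ = a * (a⁻¹ * b⁻¹ * a⁻¹) * b := by rw [h']
    _ = b⁻¹ * a⁻¹ * b := by group

abbrev IsBMWIndex (n i : ℕ) : Prop := 1 ≤ i ∧ i ≤ n - 1

namespace BAred

open BAredGen

variable {R : Type} [CommRing R] {n : ℕ} {lam laminv δinv : R} {i j : ℕ}

noncomputable def mk : FreeAlgebra R BAredGen →ₐ[R] BAred R n lam laminv δinv :=
  RingQuot.mkAlgHom R (BAredRel R n lam laminv δinv)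

theorem mk_rel {a b : FreeAlgebra R BAredGen} (h : BAredRel R n lam laminv δinv a b) :
    (mk a : BAred R n lam laminv δinv) = mk b :=
  RingQuot.mkAlgHom_rel R h

@[simp]
theorem mk_g (a : BAredGen) : (mk (g R a) : BAred R n lam laminv δinv) = gen a := rfl

@[simp]
theorem mk_eExpr (i : ℕ) : (mk (eExpr R δinv i) : BAred R n lam laminv δinv) = E i := by
  simp only [eExpr, map_sub, map_smul, map_one, mk_g]
  rfl

theorem algHom_ext {A : Type*} [Semiring A] [Algebra R A]
    {f g : BAred R n lam laminv δinv →ₐ[R] A} (h : ∀ b, f (gen b) = g (gen b)) : f = g :=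
  RingQuot.ringQuot_ext' R f g (FreeAlgebra.hom_ext (funext h))

theorem X_mul_Xinv (hi : IsBMWIndex n i) :
    (gen (X i) : BAred R n lam laminv δinv) * gen (Xinv i) = 1 := by
  convert mk_rel (.X_Xinv i hi.1 hi.2) using 1 <;> simp

theorem Xinv_mul_X (hi : IsBMWIndex n i) :
    (gen (Xinv i) : BAred R n lam laminv δinv) * gen (X i) = 1 := by
  convert mk_rel (.Xinv_X i hi.1 hi.2) using 1 <;> simp

theorem X_mul_E (hi : IsBMWIndex n i) :
    (gen (X i) : BAred R n lam laminv δinv) * E i = lam • E i := by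
  convert mk_rel (.Xe i hi.1 hi.2) using 1 <;> simp

theorem E_mul_X (hi : IsBMWIndex n i) :
    (E i : BAred R n lam laminv δinv) * gen (X i) = lam • E i := by
  convert mk_rel (.eX i hi.1 hi.2) using 1 <;> simp

theorem X_mul_X_comm (hi : IsBMWIndex n i) (hj : IsBMWIndex n j) (hd : 1 < Nat.dist i j) :
    (gen (X i) : BAred R n lam laminv δinv) * gen (X j) = gen (X j) * gen (X i) := by
  convert mk_rel (.Xcomm i j hi.1 hi.2 hj.1 hj.2 hd) using 1 <;> simp

theorem X_braid (hi : IsBMWIndex n i) (hj : IsBMWIndex n j) (hd : Nat.dist i j = 1) :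
    (gen (X i) : BAred R n lam laminv δinv) * gen (X j) * gen (X i) =
      gen (X j) * gen (X i) * gen (X j) := by
  convert mk_rel (.braid i j hi.1 hi.2 hj.1 hj.2 hd) using 1 <;> simp

theorem E_mul_X_mul_E (hi : IsBMWIndex n i) (hj : IsBMWIndex n j) (hd : Nat.dist i j = 1) :
    (E i : BAred R n lam laminv δinv) * gen (X j) * E i = laminv • E i := by
  convert mk_rel (.eXe i j hi.1 hi.2 hj.1 hj.2 hd) using 1 <;> simp

theorem E_mul_Xinv_mul_E (hi : IsBMWIndex n i) (hj : IsBMWIndex n j) (hd : Nat.dist i j = 1) :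
    (E i : BAred R n lam laminv δinv) * gen (Xinv j) * E i = lam • E i := by
  convert mk_rel (.eXinve i j hi.1 hi.2 hj.1 hj.2 hd) using 1 <;> simp

noncomputable def XUnit (hi : IsBMWIndex n i) : (BAred R n lam laminv δinv)ˣ :=
  ⟨gen (X i), gen (Xinv i), X_mul_Xinv hi, Xinv_mul_X hi⟩

theorem E_eq_bmwE (hi : IsBMWIndex n i) :
    (E i : BAred R n lam laminv δinv) = bmwE δinv (XUnit hi) :=
  rfl

theorem XUnit_braid (hi : IsBMWIndex n i) (hj : IsBMWIndex n j) (hd : Nat.dist i j = 1) :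
    (XUnit hi : (BAred R n lam laminv δinv)ˣ) * XUnit hj * XUnit hi =
      XUnit hj * XUnit hi * XUnit hj :=
  Units.ext (X_braid hi hj hd)

variable {x δ : R}

theorem Xinv_eq (hδ : δ * δinv = 1) (i : ℕ) :
    (gen (Xinv i) : BAred R n lam laminv δinv) = gen (X i) - δ • 1 + δ • E i := by
  rw [E, smul_sub, smul_smul, hδ, one_smul]
  abel

theorem E_mul_self (hlam : lam * laminv = 1) (hco : δinv * (lam - laminv) = 1 - x)
    (hi : IsBMWIndex n i) : (E i : BAred R n lam laminv δinv) * E i = x • E i := by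
  rw [E_eq_bmwE hi]
  exact bmwE_mul_self hlam hco (X_mul_E hi)

theorem E_mul_E_comm (hi : IsBMWIndex n i) (hj : IsBMWIndex n j) (hd : 1 < Nat.dist i j) :
    (E i : BAred R n lam laminv δinv) * E j = E j * E i := by
  have h : Commute (gen (X j) : BAred R n lam laminv δinv) (gen (X i)) :=
    (X_mul_X_comm hi hj hd).symm
  rw [E_eq_bmwE hi, E_eq_bmwE hj]
  exact ((h.bmwE_left (u := XUnit hj)).symm.bmwE_left (u := XUnit hi)).eq

theorem E_mul_X_mul_X (hi : IsBMWIndex n i) (hj : IsBMWIndex n j) (hd : Nat.dist i j = 1) :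
    (E i : BAred R n lam laminv δinv) * (gen (X j) * gen (X i)) =
      gen (X j) * gen (X i) * E j := by
  rw [E_eq_bmwE hi, E_eq_bmwE hj]
  exact bmwE_mul_of_mul_eq ((mul_assoc _ _ _).symm.trans (XUnit_braid hi hj hd))

theorem E_mul_Xinv_mul_Xinv (hi : IsBMWIndex n i) (hj : IsBMWIndex n j) (hd : Nat.dist i j = 1) :
    (E i : BAred R n lam laminv δinv) * (gen (Xinv j) * gen (Xinv i)) =
      gen (Xinv j) * gen (Xinv i) * E j := by
  rw [E_eq_bmwE hi, E_eq_bmwE hj]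
  exact bmwE_mul_of_mul_eq (mul_inv_mul_inv_of_braid (XUnit_braid hi hj hd))

theorem E_mul_E_mul_E (hlam : lam * laminv = 1) (hco : δinv * (lam - laminv) = 1 - x)
    (hi : IsBMWIndex n i) (hj : IsBMWIndex n j) (hd : Nat.dist i j = 1) :
    (E i : BAred R n lam laminv δinv) * E j * E i = E i := by
  rw [E_eq_bmwE hj]
  exact mul_bmwE_mul_self hco (E_mul_self hlam hco hi) (E_mul_X_mul_E hi hj hd)
    (E_mul_Xinv_mul_E hi hj hd)

end BAred

namespace BAGen

def index : BAGen → ℕ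
  | X i | Xinv i | e i => i

abbrev Out (n : ℕ) : Type := {a : BAGen // ¬IsBMWIndex n a.index}

instance : Countable BAGen := by
  refine Function.Surjective.countable (f := Sum.elim X (Sum.elim Xinv e)) ?_
  rintro (i | i | i)
  exacts [⟨.inl i, rfl⟩, ⟨.inr (.inl i), rfl⟩, ⟨.inr (.inr i), rfl⟩]

instance (n : ℕ) : Infinite (Out n) :=
  Infinite.of_injective (fun k => ⟨X (n + k), by simp only [index]; omega⟩)
    fun k l h => by simpa using congrArg Subtype.val h

end BAGen

namespace BAredGen

def index : BAredGen → ℕ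
  | X i | Xinv i => i

abbrev Out (n : ℕ) : Type := {a : BAredGen // ¬IsBMWIndex n a.index}

instance : Countable BAredGen := by
  refine Function.Surjective.countable (f := Sum.elim X Xinv) ?_
  rintro (i | i)
  exacts [⟨.inl i, rfl⟩, ⟨.inr i, rfl⟩]

instance (n : ℕ) : Infinite (Out n) :=
  Infinite.of_injective (fun k => ⟨X (n + k), by simp only [index]; omega⟩)
    fun k l h => by simpa using congrArg Subtype.val h

end BAredGen

noncomputable def outEquiv (n : ℕ) : BAGen.Out n ≃ BAredGen.Out n :=
  Classical.choice nonempty_equiv_of_countable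

namespace BA

open BAGen

variable {R : Type} [CommRing R] {n : ℕ} {x lam laminv δ δinv : R} {i : ℕ}

noncomputable def mk : FreeAlgebra R BAGen →ₐ[R] BA R n x lam laminv δ :=
  RingQuot.mkAlgHom R (BARel R n x lam laminv δ)

noncomputable def gen (a : BAGen) : BA R n x lam laminv δ := mk (FreeAlgebra.ι R a)

theorem mk_rel {a b : FreeAlgebra R BAGen} (h : BARel R n x lam laminv δ a b) :
    (mk a : BA R n x lam laminv δ) = mk b :=
  RingQuot.mkAlgHom_rel R h

@[simp]
theorem mk_g (a : BAGen) : (mk (g R a) : BA R n x lam laminv δ) = gen a := rfl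

theorem gen_e (hδ : δ * δinv = 1) (hi : IsBMWIndex n i) :
    (gen (e i) : BA R n x lam laminv δ) = 1 - δinv • (gen (X i) - gen (Xinv i)) := by
  have h : (gen (Xinv i) : BA R n x lam laminv δ) = gen (X i) - δ • 1 + δ • gen (e i) := by
    convert mk_rel (.Xinv_eq i hi.1 hi.2) using 1 <;> simp
  have hX : (gen (X i) : BA R n x lam laminv δ) - gen (Xinv i) = δ • (1 - gen (e i)) := by
    rw [h, smul_sub]
    abel
  rw [hX, smul_smul, mul_comm, hδ, one_smul, sub_sub_cancel]

theorem algHom_ext {A : Type*} [Semiring A] [Algebra R A] {f g : BA R n x lam laminv δ →ₐ[R] A}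
    (h : ∀ a, f (gen a) = g (gen a)) : f = g :=
  RingQuot.ringQuot_ext' R f g (FreeAlgebra.hom_ext (funext h))

end BA

section Isomorphism

variable {R : Type} [CommRing R] {n : ℕ} {x lam laminv δ δinv : R}

def BAredGen.toBAGen : BAredGen → BAGen
  | .X i => .X i
  | .Xinv i => .Xinv i

noncomputable def BAGen.toBAred : BAGen → BAred R n lam laminv δinv
  | .X i => BAred.gen (.X i)
  | .Xinv i => BAred.gen (.Xinv i)
  | .e i => BAred.E i

noncomputable def phiGen (n : ℕ) (lam laminv δinv : R) (a : BAGen) : BAred R n lam laminv δinv :=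
  if h : IsBMWIndex n a.index then a.toBAred else BAred.gen (outEquiv n ⟨a, h⟩).1

noncomputable def psiGen (n : ℕ) (x lam laminv δ : R) (b : BAredGen) : BA R n x lam laminv δ :=
  BA.gen (if h : IsBMWIndex n b.index then b.toBAGen else ((outEquiv n).symm ⟨b, h⟩).1)

variable {i : ℕ}

theorem phiGen_X (h : IsBMWIndex n i) :
    phiGen n lam laminv δinv (.X i) = BAred.gen (.X i) :=
  dif_pos h

theorem phiGen_Xinv (h : IsBMWIndex n i) :
    phiGen n lam laminv δinv (.Xinv i) = BAred.gen (.Xinv i) :=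
  dif_pos h

theorem phiGen_e (h : IsBMWIndex n i) : phiGen n lam laminv δinv (.e i) = BAred.E i :=
  dif_pos h

theorem phiGen_rel (hlam : lam * laminv = 1) (hδ : δ * δinv = 1)
    (hco : δinv * (lam - laminv) = 1 - x) ⦃a b : FreeAlgebra R BAGen⦄
    (h : BAGen.BARel R n x lam laminv δ a b) :
    FreeAlgebra.lift R (phiGen n lam laminv δinv) a =
      FreeAlgebra.lift R (phiGen n lam laminv δinv) b := by
  cases h <;> simp (disch := exact ⟨‹_›, ‹_›⟩) only [BAGen.g, map_mul, map_one, map_smul,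
    map_add, map_sub, FreeAlgebra.lift_ι_apply, phiGen_X, phiGen_Xinv, phiGen_e]
  case X_Xinv i h1 h2 => exact BAred.X_mul_Xinv ⟨h1, h2⟩
  case Xinv_X i h1 h2 => exact BAred.Xinv_mul_X ⟨h1, h2⟩
  case Xcomm i j h1 h2 h3 h4 hd => exact BAred.X_mul_X_comm ⟨h1, h2⟩ ⟨h3, h4⟩ hd
  case braid i j h1 h2 h3 h4 hd => exact BAred.X_braid ⟨h1, h2⟩ ⟨h3, h4⟩ hd
  case Xe i h1 h2 => exact BAred.X_mul_E ⟨h1, h2⟩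
  case eX i h1 h2 => exact BAred.E_mul_X ⟨h1, h2⟩
  case eXe i j h1 h2 h3 h4 hd => exact BAred.E_mul_X_mul_E ⟨h1, h2⟩ ⟨h3, h4⟩ hd
  case eXinve i j h1 h2 h3 h4 hd => exact BAred.E_mul_Xinv_mul_E ⟨h1, h2⟩ ⟨h3, h4⟩ hd
  case ee i h1 h2 => exact BAred.E_mul_self hlam hco ⟨h1, h2⟩
  case Xinv_eq i _ _ => exact BAred.Xinv_eq hδ i
  case ecomm i j h1 h2 h3 h4 hd => exact BAred.E_mul_E_comm ⟨h1, h2⟩ ⟨h3, h4⟩ hd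
  case eXX i j h1 h2 h3 h4 hd => exact BAred.E_mul_X_mul_X ⟨h1, h2⟩ ⟨h3, h4⟩ hd
  case eXinvXinv i j h1 h2 h3 h4 hd => exact BAred.E_mul_Xinv_mul_Xinv ⟨h1, h2⟩ ⟨h3, h4⟩ hd
  case eee i j h1 h2 h3 h4 hd => exact BAred.E_mul_E_mul_E hlam hco ⟨h1, h2⟩ ⟨h3, h4⟩ hd

theorem psiGen_X (h : IsBMWIndex n i) : psiGen n x lam laminv δ (.X i) = BA.gen (.X i) :=
  congrArg BA.gen (dif_pos h)

theorem psiGen_Xinv (h : IsBMWIndex n i) :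
    psiGen n x lam laminv δ (.Xinv i) = BA.gen (.Xinv i) :=
  congrArg BA.gen (dif_pos h)

theorem lift_psiGen_eExpr (hδ : δ * δinv = 1) (h : IsBMWIndex n i) :
    FreeAlgebra.lift R (psiGen n x lam laminv δ) (BAredGen.eExpr R δinv i) = BA.gen (.e i) := by
  rw [BA.gen_e hδ h]
  simp only [BAredGen.eExpr, BAredGen.g, map_sub, map_smul, map_one, FreeAlgebra.lift_ι_apply,
    psiGen_X h, psiGen_Xinv h]

theorem psiGen_rel (hδ : δ * δinv = 1) ⦃a b : FreeAlgebra R BAredGen⦄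
    (h : BAredGen.BAredRel R n lam laminv δinv a b) :
    FreeAlgebra.lift R (psiGen n x lam laminv δ) a =
      FreeAlgebra.lift R (psiGen n x lam laminv δ) b := by
  cases h <;> simp (disch := first | exact ⟨‹_›, ‹_›⟩ | assumption) only [BAredGen.g, map_mul,
    map_one, map_smul, FreeAlgebra.lift_ι_apply, psiGen_X, psiGen_Xinv, lift_psiGen_eExpr]
  case X_Xinv i h1 h2 => convert BA.mk_rel (.X_Xinv i h1 h2) using 1 <;> simp
  case Xinv_X i h1 h2 => convert BA.mk_rel (.Xinv_X i h1 h2) using 1 <;> simp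
  case Xcomm i j h1 h2 h3 h4 hd => convert BA.mk_rel (.Xcomm i j h1 h2 h3 h4 hd) using 1 <;> simp
  case braid i j h1 h2 h3 h4 hd => convert BA.mk_rel (.braid i j h1 h2 h3 h4 hd) using 1 <;> simp
  case Xe i h1 h2 => convert BA.mk_rel (.Xe i h1 h2) using 1 <;> simp
  case eX i h1 h2 => convert BA.mk_rel (.eX i h1 h2) using 1 <;> simp
  case eXe i j h1 h2 h3 h4 hd => convert BA.mk_rel (.eXe i j h1 h2 h3 h4 hd) using 1 <;> simp
  case eXinve i j h1 h2 h3 h4 hd => convert BA.mk_rel (.eXinve i j h1 h2 h3 h4 hd) using 1 <;> simp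

noncomputable def phiHom (hlam : lam * laminv = 1) (hδ : δ * δinv = 1)
    (hco : δinv * (lam - laminv) = 1 - x) :
    BA R n x lam laminv δ →ₐ[R] BAred R n lam laminv δinv :=
  RingQuot.liftAlgHom R ⟨FreeAlgebra.lift R (phiGen n lam laminv δinv), phiGen_rel hlam hδ hco⟩

noncomputable def psiHom (hδ : δ * δinv = 1) :
    BAred R n lam laminv δinv →ₐ[R] BA R n x lam laminv δ :=
  RingQuot.liftAlgHom R ⟨FreeAlgebra.lift R (psiGen n x lam laminv δ), psiGen_rel hδ⟩

theorem phiHom_gen (hlam : lam * laminv = 1) (hδ : δ * δinv = 1)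
    (hco : δinv * (lam - laminv) = 1 - x) (a : BAGen) :
    phiHom (n := n) hlam hδ hco (BA.gen a) = phiGen n lam laminv δinv a :=
  (RingQuot.liftAlgHom_mkAlgHom_apply _ _ _ _).trans (FreeAlgebra.lift_ι_apply _ _)

theorem psiHom_gen (hδ : δ * δinv = 1) (b : BAredGen) :
    psiHom (n := n) (x := x) (lam := lam) (laminv := laminv) hδ (BAred.gen b) =
      psiGen n x lam laminv δ b :=
  (RingQuot.liftAlgHom_mkAlgHom_apply _ _ _ _).trans (FreeAlgebra.lift_ι_apply _ _)

theorem phiGen_outEquiv_symm (b : BAredGen.Out n) :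
    phiGen n lam laminv δinv ((outEquiv n).symm b).1 = BAred.gen b.1 := by
  rw [phiGen, dif_neg ((outEquiv n).symm b).2, Subtype.coe_eta, Equiv.apply_symm_apply]

theorem psiGen_outEquiv (a : BAGen.Out n) :
    psiGen n x lam laminv δ (outEquiv n a).1 = BA.gen a.1 := by
  rw [psiGen, dif_neg (outEquiv n a).2, Subtype.coe_eta, Equiv.symm_apply_apply]

theorem psiHom_phiGen (hδ : δ * δinv = 1) (a : BAGen) :
    psiHom (x := x) hδ (phiGen n lam laminv δinv a) = BA.gen a := by
  by_cases h : IsBMWIndex n a.index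
  · cases a with
    | X i => rw [phiGen_X (i := i) h, psiHom_gen, psiGen_X (i := i) h]
    | Xinv i => rw [phiGen_Xinv (i := i) h, psiHom_gen, psiGen_Xinv (i := i) h]
    | e i =>
      rw [phiGen_e (i := i) h, BAred.E, BA.gen_e (i := i) hδ h]
      simp only [map_sub, map_smul, map_one, psiHom_gen, psiGen_X (i := i) h,
        psiGen_Xinv (i := i) h]
  · rw [phiGen, dif_neg h, psiHom_gen, psiGen_outEquiv]

theorem phiHom_psiGen (hlam : lam * laminv = 1) (hδ : δ * δinv = 1)
    (hco : δinv * (lam - laminv) = 1 - x) (b : BAredGen) :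
    phiHom hlam hδ hco (psiGen n x lam laminv δ b) = BAred.gen b := by
  by_cases h : IsBMWIndex n b.index
  · cases b with
    | X i => rw [psiGen_X (i := i) h, phiHom_gen, phiGen_X (i := i) h]
    | Xinv i => rw [psiGen_Xinv (i := i) h, phiHom_gen, phiGen_Xinv (i := i) h]
  · rw [psiGen, dif_neg h, phiHom_gen, phiGen_outEquiv_symm]

noncomputable def BA.algEquivBAred (hlam : lam * laminv = 1) (hδ : δ * δinv = 1)
    (hco : δinv * (lam - laminv) = 1 - x) :
    BA R n x lam laminv δ ≃ₐ[R] BAred R n lam laminv δinv :=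
  AlgEquiv.ofAlgHom (phiHom hlam hδ hco) (psiHom hδ)
    (BAred.algHom_ext fun b => by simp [psiHom_gen, phiHom_psiGen])
    (BA.algHom_ext fun a => by simp [phiHom_gen, psiHom_phiGen])

end Isomorphism

theorem stmt4_general {R : Type} [CommRing R] (n : ℕ)
    (x lam laminv δ δinv : R)
    (hlam : lam * laminv = 1) (hδ : δ * δinv = 1)
    (hparam : (1 - x) * δ = lam - laminv) :
    Nonempty (BA R n x lam laminv δ ≃ₐ[R] BAred R n lam laminv δinv) ∧
    (∀ i, 1 ≤ i → i ≤ n - 1 →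
      (BAred.E i : BAred R n lam laminv δinv) * BAred.E i = x • BAred.E i) ∧
    (∀ i j, 1 ≤ i → i ≤ n - 1 → 1 ≤ j → j ≤ n - 1 → 1 < Nat.dist i j →
      (BAred.E i : BAred R n lam laminv δinv) * BAred.E j = BAred.E j * BAred.E i) ∧
    (∀ i j, 1 ≤ i → i ≤ n - 1 → 1 ≤ j → j ≤ n - 1 → Nat.dist i j = 1 →
      (BAred.E i : BAred R n lam laminv δinv) *
          (BAred.gen (BAredGen.X j) * BAred.gen (BAredGen.X i)) =
        BAred.gen (BAredGen.X j) * BAred.gen (BAredGen.X i) * BAred.E j) ∧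
    (∀ i j, 1 ≤ i → i ≤ n - 1 → 1 ≤ j → j ≤ n - 1 → Nat.dist i j = 1 →
      (BAred.E i : BAred R n lam laminv δinv) *
          (BAred.gen (BAredGen.Xinv j) * BAred.gen (BAredGen.Xinv i)) =
        BAred.gen (BAredGen.Xinv j) * BAred.gen (BAredGen.Xinv i) * BAred.E j) ∧
    (∀ i j, 1 ≤ i → i ≤ n - 1 → 1 ≤ j → j ≤ n - 1 → Nat.dist i j = 1 →
      (BAred.E i : BAred R n lam laminv δinv) * BAred.E j * BAred.E i = BAred.E i) := by
  have hco : δinv * (lam - laminv) = 1 - x := by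
    linear_combination (1 - x) * hδ - δinv * hparam
  exact ⟨⟨BA.algEquivBAred hlam hδ hco⟩,
    fun i h1 h2 => BAred.E_mul_self hlam hco ⟨h1, h2⟩,
    fun i j h1 h2 h3 h4 hd => BAred.E_mul_E_comm ⟨h1, h2⟩ ⟨h3, h4⟩ hd,
    fun i j h1 h2 h3 h4 hd => BAred.E_mul_X_mul_X ⟨h1, h2⟩ ⟨h3, h4⟩ hd,
    fun i j h1 h2 h3 h4 hd => BAred.E_mul_Xinv_mul_Xinv ⟨h1, h2⟩ ⟨h3, h4⟩ hd,
    fun i j h1 h2 h3 h4 hd => BAred.E_mul_E_mul_E hlam hco ⟨h1, h2⟩ ⟨h3, h4⟩ hd⟩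

/-- If `δ` is a unit in `R`, the BMW algebra `BA_n(R)` is isomorphic to the
algebra generated by invertible `X_1, …, X_{n−1}` subject only to the braid
relations, `X_i e_i = e_i X_i = λ e_i` and `e_i X_j^{±1} e_i = λ^{∓1} e_i` for
`|i−j| = 1`, with `e_i := 1 − δ⁻¹(X_i − X_i⁻¹)`.  In particular, with this
definition of `e_i`, the relations `e_i² = x e_i`, `e_i e_j = e_j e_i` for
`|i−j| > 1`, `e_i X_j^{±1} X_i^{±1} = X_j^{±1} X_i^{±1} e_j` for `|i−j| = 1`,
and `e_i e_j e_i = e_i` for `|i−j| = 1` all hold. -/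
theorem stmt4 {R : Type} [CommRing R] [IsDomain R] (n : ℕ)
    (x lam laminv δ δinv : R)
    (hx : IsUnit x) (hlam : lam * laminv = 1) (hδ : δ * δinv = 1)
    (hparam : (1 - x) * δ = lam - laminv) :
    Nonempty (BA R n x lam laminv δ ≃ₐ[R] BAred R n lam laminv δinv) ∧
    (∀ i, 1 ≤ i → i ≤ n - 1 →
      (BAred.E i : BAred R n lam laminv δinv) * BAred.E i = x • BAred.E i) ∧
    (∀ i j, 1 ≤ i → i ≤ n - 1 → 1 ≤ j → j ≤ n - 1 → 1 < Nat.dist i j →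
      (BAred.E i : BAred R n lam laminv δinv) * BAred.E j = BAred.E j * BAred.E i) ∧
    (∀ i j, 1 ≤ i → i ≤ n - 1 → 1 ≤ j → j ≤ n - 1 → Nat.dist i j = 1 →
      (BAred.E i : BAred R n lam laminv δinv) *
          (BAred.gen (BAredGen.X j) * BAred.gen (BAredGen.X i)) =
        BAred.gen (BAredGen.X j) * BAred.gen (BAredGen.X i) * BAred.E j) ∧
    (∀ i j, 1 ≤ i → i ≤ n - 1 → 1 ≤ j → j ≤ n - 1 → Nat.dist i j = 1 →
      (BAred.E i : BAred R n lam laminv δinv) *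
          (BAred.gen (BAredGen.Xinv j) * BAred.gen (BAredGen.Xinv i)) =
        BAred.gen (BAredGen.Xinv j) * BAred.gen (BAredGen.Xinv i) * BAred.E j) ∧
    (∀ i j, 1 ≤ i → i ≤ n - 1 → 1 ≤ j → j ≤ n - 1 → Nat.dist i j = 1 →
      (BAred.E i : BAred R n lam laminv δinv) * BAred.E j * BAred.E i = BAred.E i) :=
  stmt4_general n x lam laminv δ δinv hlam hδ hparam
end

section
/- In BB^k_n, define Y'_i := X_{i−1}X_{i−2}⋯X_1 Y X_1⋯X_{i−2}X_{i−1}. Then the elements Y'_1,…,Y'_n pairwise commute: Y'_iY'_j = Y'_jY'_i for all i,j. -/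
/-- A model of the Ariki–Koike–Birman–Murakami–Wenzl algebra `BB^k_n(R)`: an
`R`-algebra `A` containing elements `Y`, `X i`, `e i` (with `X i` and `Y`
invertible) satisfying the BMW relations of `BA_n` together with the B-type
relations. -/
structure AKBMWModel (R : Type) [CommRing R] (A : Type) [Ring A] [Algebra R A]
    (n k : ℕ) where
  X : ℕ → A
  Xinv : ℕ → A
  e : ℕ → A
  Y : A
  Yinv : A
  x : R
  lam : R
  laminv : R
  δ : R
  κ : R
  κinv : R
  p : ℕ → R
  pinv : ℕ → R
  Acoef : ℕ → R
  x_unit : IsUnit x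
  lam_laminv : lam * laminv = 1
  κ_κinv : κ * κinv = 1
  p_pinv : ∀ i, i ≤ k - 1 → p i * pinv i = 1
  param : (1 - x) * δ = lam - laminv
  X_Xinv : ∀ i, 1 ≤ i → i ≤ n - 1 → X i * Xinv i = 1
  Xinv_X : ∀ i, 1 ≤ i → i ≤ n - 1 → Xinv i * X i = 1
  Y_Yinv : Y * Yinv = 1
  Yinv_Y : Yinv * Y = 1
  Xcomm : ∀ i j, 1 ≤ i → i ≤ n - 1 → 1 ≤ j → j ≤ n - 1 → 1 < Nat.dist i j →
    X i * X j = X j * X i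
  braid : ∀ i j, 1 ≤ i → i ≤ n - 1 → 1 ≤ j → j ≤ n - 1 → Nat.dist i j = 1 →
    X i * X j * X i = X j * X i * X j
  Xe : ∀ i, 1 ≤ i → i ≤ n - 1 → X i * e i = lam • e i
  eX : ∀ i, 1 ≤ i → i ≤ n - 1 → e i * X i = lam • e i
  eXe : ∀ i j, 1 ≤ i → i ≤ n - 1 → 1 ≤ j → j ≤ n - 1 → Nat.dist i j = 1 →
    e i * X j * e i = laminv • e i
  eXinve : ∀ i j, 1 ≤ i → i ≤ n - 1 → 1 ≤ j → j ≤ n - 1 → Nat.dist i j = 1 →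
    e i * Xinv j * e i = lam • e i
  ee : ∀ i, 1 ≤ i → i ≤ n - 1 → e i * e i = x • e i
  Xinv_eq : ∀ i, 1 ≤ i → i ≤ n - 1 → Xinv i = X i - δ • (1 : A) + δ • e i
  ecomm : ∀ i j, 1 ≤ i → i ≤ n - 1 → 1 ≤ j → j ≤ n - 1 → 1 < Nat.dist i j →
    e i * e j = e j * e i
  eXX : ∀ i j, 1 ≤ i → i ≤ n - 1 → 1 ≤ j → j ≤ n - 1 → Nat.dist i j = 1 →
    e i * (X j * X i) = X j * X i * e j
  eXinvXinv : ∀ i j, 1 ≤ i → i ≤ n - 1 → 1 ≤ j → j ≤ n - 1 → Nat.dist i j = 1 →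
    e i * (Xinv j * Xinv i) = Xinv j * Xinv i * e j
  eee : ∀ i j, 1 ≤ i → i ≤ n - 1 → 1 ≤ j → j ≤ n - 1 → Nat.dist i j = 1 →
    e i * e j * e i = e i
  fourBraid : 2 ≤ n → X 1 * Y * X 1 * Y = Y * X 1 * Y * X 1
  YXcomm : ∀ i, 2 ≤ i → i ≤ n - 1 → Y * X i = X i * Y
  YXYe : 2 ≤ n → Y * X 1 * Y * e 1 = κ • e 1
  Ypoly : ((List.range k).map (fun i => Y - algebraMap R A (p i))).prod = 0
  eYe : ∀ m, 2 ≤ n → 1 ≤ m → m ≤ k - 1 → e 1 * Y ^ m * e 1 = Acoef m • e 1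

/-- The iterated conjugates `Z_i = L_{i-1} ⋯ L_1 · Z · R_1 ⋯ R_{i-1}`,
so that `conjIter L R Z 1 = Z` and
`conjIter L R Z (i+1) = L i * conjIter L R Z i * R i` for `i ≥ 1`. -/
def conjIter {A : Type} [Ring A] (L Rt : ℕ → A) (Z : A) : ℕ → A
  | 0 => Z
  | 1 => Z
  | (m+2) => L (m+1) * conjIter L Rt Z (m+1) * Rt (m+1)

/-- `Y_i = X_{i-1} ⋯ X_1 Y X_1⁻¹ ⋯ X_{i-1}⁻¹`. -/
def AKBMWModel.Yi {R : Type} [CommRing R] {A : Type} [Ring A] [Algebra R A]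
    {n k : ℕ} (B : AKBMWModel R A n k) : ℕ → A :=
  conjIter B.X B.Xinv B.Y

/-- The inverse `Y_i⁻¹ = X_{i-1} ⋯ X_1 Y⁻¹ X_1⁻¹ ⋯ X_{i-1}⁻¹` of `Y_i`. -/
def AKBMWModel.Yiinv {R : Type} [CommRing R] {A : Type} [Ring A] [Algebra R A]
    {n k : ℕ} (B : AKBMWModel R A n k) : ℕ → A :=
  conjIter B.X B.Xinv B.Yinv

/-- `Y'_i = X_{i-1} ⋯ X_1 Y X_1 ⋯ X_{i-1}`. -/
def AKBMWModel.Yi' {R : Type} [CommRing R] {A : Type} [Ring A] [Algebra R A]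
    {n k : ℕ} (B : AKBMWModel R A n k) : ℕ → A :=
  conjIter B.X B.X B.Y

/-- The inverse `(Y'_i)⁻¹ = X_{i-1}⁻¹ ⋯ X_1⁻¹ Y⁻¹ X_1⁻¹ ⋯ X_{i-1}⁻¹` of `Y'_i`. -/
def AKBMWModel.Yi'inv {R : Type} [CommRing R] {A : Type} [Ring A] [Algebra R A]
    {n k : ℕ} (B : AKBMWModel R A n k) : ℕ → A :=
  conjIter B.Xinv B.Xinv B.Yinv

section Aux

variable {R : Type} [CommRing R] {A : Type} [Ring A] [Algebra R A] {n k : ℕ}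
  (B : AKBMWModel R A n k)

lemma AKBMWModel.Yi'_succ (p : ℕ) (hp : 1 ≤ p) :
    B.Yi' (p + 1) = B.X p * B.Yi' p * B.X p := by
  obtain ⟨m, rfl⟩ : ∃ m, p = m + 1 := ⟨p - 1, by omega⟩
  rfl

lemma AKBMWModel.XYi'comm (i : ℕ) : ∀ m, 1 ≤ i → i + 1 ≤ m → m ≤ n - 1 →
    B.X m * B.Yi' i = B.Yi' i * B.X m := by
  induction i with
  | zero => intro m h _ _; omega
  | succ p ih =>
    intro m _ h2 h3
    rcases Nat.eq_zero_or_pos p with hp | hp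
    · subst hp
      exact (B.YXcomm m (by omega) h3).symm
    · rw [B.Yi'_succ p hp]
      have hx : B.X m * B.X p = B.X p * B.X m :=
        (B.Xcomm p m hp (by omega) (by omega) h3 (by unfold Nat.dist; omega)).symm
      have ht := ih m hp (by omega) h3
      calc B.X m * (B.X p * B.Yi' p * B.X p)
          = (B.X m * B.X p) * B.Yi' p * B.X p := by simp only [mul_assoc]
        _ = (B.X p * B.X m) * B.Yi' p * B.X p := by rw [hx]
        _ = B.X p * (B.X m * B.Yi' p) * B.X p := by simp only [mul_assoc]
        _ = B.X p * (B.Yi' p * B.X m) * B.X p := by rw [ht]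
        _ = B.X p * B.Yi' p * (B.X m * B.X p) := by simp only [mul_assoc]
        _ = B.X p * B.Yi' p * (B.X p * B.X m) := by rw [hx]
        _ = B.X p * B.Yi' p * B.X p * B.X m := by simp only [mul_assoc]

private lemma fourbraid_step {A : Type} [Ring A] (a b t : A)
    (hbraid : a * b * a = b * a * b)
    (hbt : b * t = t * b)
    (hIH : a * t * a * t = t * a * t * a) :
    b * (a * t * a) * b * (a * t * a) = (a * t * a) * b * (a * t * a) * b := by
  calc b * (a * t * a) * b * (a * t * a)
      = (b * a * t) * (a * b * a) * (t * a) := by simp only [mul_assoc]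
    _ = (b * a * t) * (b * a * b) * (t * a) := by rw [hbraid]
    _ = (b * a) * (t * b) * (a * b * t * a) := by simp only [mul_assoc]
    _ = (b * a) * (b * t) * (a * b * t * a) := by rw [← hbt]
    _ = (b * a * b * t * a) * (b * t) * a := by simp only [mul_assoc]
    _ = (b * a * b * t * a) * (t * b) * a := by rw [hbt]
    _ = (b * a * b) * (t * a * t) * (b * a) := by simp only [mul_assoc]
    _ = (a * b * a) * (t * a * t) * (b * a) := by rw [← hbraid]
    _ = (a * b) * (a * t * a * t) * (b * a) := by simp only [mul_assoc]
    _ = (a * b) * (t * a * t * a) * (b * a) := by rw [hIH]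
    _ = (a * b * t * a * t) * (a * b * a) := by simp only [mul_assoc]
    _ = (a * b * t * a * t) * (b * a * b) := by rw [hbraid]
    _ = (a * b * t * a) * (t * b) * (a * b) := by simp only [mul_assoc]
    _ = (a * b * t * a) * (b * t) * (a * b) := by rw [← hbt]
    _ = a * (b * t) * (a * b * t * a * b) := by simp only [mul_assoc]
    _ = a * (t * b) * (a * b * t * a * b) := by rw [hbt]
    _ = (a * t) * (b * a * b) * (t * a * b) := by simp only [mul_assoc]
    _ = (a * t) * (a * b * a) * (t * a * b) := by rw [← hbraid]
    _ = (a * t * a) * b * (a * t * a) * b := by simp only [mul_assoc]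

lemma AKBMWModel.fourBraidYi' (i : ℕ) : 1 ≤ i → i ≤ n - 1 →
    B.X i * B.Yi' i * B.X i * B.Yi' i = B.Yi' i * B.X i * B.Yi' i * B.X i := by
  induction i with
  | zero => omega
  | succ p ih =>
    intro _ h2
    rcases Nat.eq_zero_or_pos p with hp | hp
    · subst hp
      exact B.fourBraid (by omega)
    · rw [B.Yi'_succ p hp]
      exact fourbraid_step (B.X p) (B.X (p + 1)) (B.Yi' p)
        (B.braid p (p + 1) hp (by omega) (by omega) h2 (by unfold Nat.dist; omega))
        (B.XYi'comm p (p + 1) hp le_rfl h2)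
        (ih hp (by omega))

lemma AKBMWModel.Yi'_comm_lt (j : ℕ) : ∀ i, 1 ≤ i → i < j → j ≤ n →
    B.Yi' i * B.Yi' j = B.Yi' j * B.Yi' i := by
  induction j with
  | zero => omega
  | succ p ih =>
    intro i h1 h2 h3
    have hp : 1 ≤ p := by omega
    rw [B.Yi'_succ p hp]
    rcases Nat.lt_or_ge i p with hip | hip
    · have hX := B.XYi'comm i p h1 (by omega) (by omega)
      have ht := ih i h1 hip (by omega)
      calc B.Yi' i * (B.X p * B.Yi' p * B.X p)
          = (B.Yi' i * B.X p) * B.Yi' p * B.X p := by simp only [mul_assoc]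
        _ = (B.X p * B.Yi' i) * B.Yi' p * B.X p := by rw [← hX]
        _ = B.X p * (B.Yi' i * B.Yi' p) * B.X p := by simp only [mul_assoc]
        _ = B.X p * (B.Yi' p * B.Yi' i) * B.X p := by rw [ht]
        _ = B.X p * B.Yi' p * (B.Yi' i * B.X p) := by simp only [mul_assoc]
        _ = B.X p * B.Yi' p * (B.X p * B.Yi' i) := by rw [← hX]
        _ = B.X p * B.Yi' p * B.X p * B.Yi' i := by simp only [mul_assoc]
    · have hip' : i = p := by omega
      subst hip'
      calc B.Yi' i * (B.X i * B.Yi' i * B.X i)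
          = B.Yi' i * B.X i * B.Yi' i * B.X i := by simp only [mul_assoc]
        _ = B.X i * B.Yi' i * B.X i * B.Yi' i :=
            (B.fourBraidYi' i h1 (by omega)).symm
        _ = (B.X i * B.Yi' i * B.X i) * B.Yi' i := by simp only [mul_assoc]

end Aux

/-- In `BB^k_n`, with `Y'_i := X_{i−1}⋯X_1 Y X_1⋯X_{i−1}`, the elements
`Y'_1, …, Y'_n` pairwise commute. -/
theorem stmt7 {R : Type} [CommRing R] [IsDomain R] {A : Type} [Ring A] [Algebra R A]
    {n k : ℕ} (B : AKBMWModel R A n k) (i j : ℕ) (hi1 : 1 ≤ i) (hi2 : i ≤ n)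
    (hj1 : 1 ≤ j) (hj2 : j ≤ n) :
    B.Yi' i * B.Yi' j = B.Yi' j * B.Yi' i := by
  rcases lt_trichotomy i j with h | h | h
  · exact B.Yi'_comm_lt j i hi1 h hj2
  · subst h; rfl
  · exact (B.Yi'_comm_lt i j hj1 h hi2).symm
end

section
/- In BB^k_n, with Y_i := X_{i−1}⋯X_1 Y X_1^{-1}⋯X_{i−1}^{-1}, the relation e_i Y_i^m e_i = A_m e_i holds for all 1 ≤ i ≤ n−1 and 1 ≤ m ≤ k−1. -/
section Aux

variable {A : Type} [Ring A]

lemma commInvAux {a b bi : A} (h : a * b = b * a) (h1 : b * bi = 1) (h2 : bi * b = 1) :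
    a * bi = bi * a := by
  calc a * bi = (bi * b) * a * bi := by rw [h2, one_mul]
    _ = bi * (b * a) * bi := by noncomm_ring
    _ = bi * (a * b) * bi := by rw [h]
    _ = bi * a * (b * bi) := by noncomm_ring
    _ = bi * a := by rw [h1, mul_one]

lemma conjPowAux {a z ai : A} (h1 : a * ai = 1) (h2 : ai * a = 1) (m : ℕ) :
    (a * z * ai) ^ m = a * z ^ m * ai := by
  induction m with
  | zero => simp [h1]
  | succ j ih =>
      rw [pow_succ, pow_succ, ih]
      calc a * z ^ j * ai * (a * z * ai)
          = a * z ^ j * (ai * a) * z * ai := by noncomm_ring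
        _ = a * (z ^ j * z) * ai := by rw [h2]; noncomm_ring

lemma keyLeftAux {a b bi f f' : A} (hbbi : b * bi = 1)
    (h1 : f' * (a * b) = a * b * f) (t : A) :
    f' * (a * t) = a * (b * (f * (bi * t))) := by
  calc f' * (a * t) = f' * (a * ((b * bi) * t)) := by rw [hbbi, one_mul]
    _ = f' * (a * b) * (bi * t) := by noncomm_ring
    _ = a * b * f * (bi * t) := by rw [h1]
    _ = a * (b * (f * (bi * t))) := by noncomm_ring

lemma keyRightAux {ai b bi f f' : A} (hbbi : b * bi = 1)
    (h2 : f * (bi * ai) = bi * ai * f') :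
    ai * f' = b * (f * (bi * ai)) := by
  calc ai * f' = (b * bi) * ai * f' := by rw [hbbi, one_mul]
    _ = b * (bi * ai * f') := by noncomm_ring
    _ = b * (f * (bi * ai)) := by rw [← h2]

end Aux

lemma AKBMWModel.Yi_succ {R : Type} [CommRing R] {A : Type} [Ring A] [Algebra R A]
    {n k : ℕ} (B : AKBMWModel R A n k) (i : ℕ) (h : 1 ≤ i) :
    B.Yi (i + 1) = B.X i * B.Yi i * B.Xinv i := by
  cases i with
  | zero => omega
  | succ j => rfl

lemma AKBMWModel.Yi_comm {R : Type} [CommRing R] {A : Type} [Ring A] [Algebra R A]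
    {n k : ℕ} (B : AKBMWModel R A n k) :
    ∀ i, 1 ≤ i → ∀ j, i < j → j ≤ n - 1 → B.Yi i * B.X j = B.X j * B.Yi i := by
  intro i
  induction i with
  | zero => intro h; exact absurd h (by norm_num)
  | succ p ih =>
    intro _ j hij hj
    cases p with
    | zero =>
        have h1 : B.Yi 1 = B.Y := rfl
        rw [h1]
        exact B.YXcomm j (by omega) hj
    | succ q =>
        have hq : 1 ≤ q + 1 := by omega
        have hpn : q + 1 ≤ n - 1 := by omega
        have hXX : B.X (q+1) * B.X j = B.X j * B.X (q+1) :=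
          B.Xcomm (q+1) j hq hpn (by omega) hj (by simp [Nat.dist]; omega)
        have hinv : B.X j * B.Xinv (q+1) = B.Xinv (q+1) * B.X j :=
          commInvAux hXX.symm (B.X_Xinv (q+1) hq hpn) (B.Xinv_X (q+1) hq hpn)
        have hY : B.Yi (q+1) * B.X j = B.X j * B.Yi (q+1) := ih hq j (by omega) hj
        rw [B.Yi_succ (q+1) hq]
        calc B.X (q+1) * B.Yi (q+1) * B.Xinv (q+1) * B.X j
            = B.X (q+1) * B.Yi (q+1) * (B.Xinv (q+1) * B.X j) := by rw [mul_assoc]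
          _ = B.X (q+1) * B.Yi (q+1) * (B.X j * B.Xinv (q+1)) := by rw [hinv]
          _ = B.X (q+1) * (B.Yi (q+1) * B.X j) * B.Xinv (q+1) := by noncomm_ring
          _ = B.X (q+1) * (B.X j * B.Yi (q+1)) * B.Xinv (q+1) := by rw [hY]
          _ = (B.X (q+1) * B.X j) * (B.Yi (q+1) * B.Xinv (q+1)) := by noncomm_ring
          _ = (B.X j * B.X (q+1)) * (B.Yi (q+1) * B.Xinv (q+1)) := by rw [hXX]
          _ = B.X j * (B.X (q+1) * B.Yi (q+1) * B.Xinv (q+1)) := by noncomm_ring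

/-- In `BB^k_n`, with `Y_i := X_{i−1}⋯X_1 Y X_1⁻¹⋯X_{i−1}⁻¹`, the relation
`e_i Y_i^m e_i = A_m e_i` holds for `1 ≤ i ≤ n−1` and `1 ≤ m ≤ k−1`. -/
theorem stmt9 {R : Type} [CommRing R] [IsDomain R] {A : Type} [Ring A] [Algebra R A]
    {n k : ℕ} (B : AKBMWModel R A n k) (i m : ℕ) (h1 : 1 ≤ i) (h2 : i ≤ n - 1)
    (hm1 : 1 ≤ m) (hm2 : m ≤ k - 1) :
    B.e i * B.Yi i ^ m * B.e i = B.Acoef m • B.e i := by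

  induction i with
  | zero => exact absurd h1 (by norm_num)
  | succ p ih =>
    cases p with
    | zero =>
        have hY : B.Yi 1 = B.Y := rfl
        rw [hY]
        exact B.eYe m (by omega) hm1 hm2
    | succ q =>
        set p := q + 1 with hp
        have hq : 1 ≤ p := by omega
        have hpn : p ≤ n - 1 := by omega
        have hb1 : 1 ≤ p + 1 := by omega
        have hbn : p + 1 ≤ n - 1 := h2
        have haai := B.X_Xinv p hq hpn
        have haia := B.Xinv_X p hq hpn
        have hbbi := B.X_Xinv (p+1) hb1 hbn
        have hbib := B.Xinv_X (p+1) hb1 hbn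
        have hXX : B.e (p+1) * (B.X p * B.X (p+1)) = B.X p * B.X (p+1) * B.e p :=
          B.eXX (p+1) p hb1 hbn hq hpn (by simp [Nat.dist])
        have hXinv : B.e p * (B.Xinv (p+1) * B.Xinv p)
            = B.Xinv (p+1) * B.Xinv p * B.e (p+1) :=
          B.eXinvXinv p (p+1) hq hpn hb1 hbn (by simp [Nat.dist])
        have hc : Commute (B.Yi p) (B.X (p+1)) := B.Yi_comm p hq (p+1) (by omega) hbn
        have hcomm : B.Yi p ^ m * B.X (p+1) = B.X (p+1) * B.Yi p ^ m :=
          (hc.pow_left m).eq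
        have hcommInv : B.Yi p ^ m * B.Xinv (p+1) = B.Xinv (p+1) * B.Yi p ^ m :=
          commInvAux hcomm hbbi hbib
        have hpow : B.Yi (p+1) ^ m = B.X p * B.Yi p ^ m * B.Xinv p := by
          rw [B.Yi_succ p hq, conjPowAux haai haia]
        have eIH : B.e p * B.Yi p ^ m * B.e p = B.Acoef m • B.e p := ih hq hpn
        have hL := keyLeftAux hbbi hXX
        have hR := keyRightAux hbbi hXinv
        set a := B.X p
        set ai := B.Xinv p
        set b := B.X (p+1)
        set bi := B.Xinv (p+1)
        set f := B.e p
        set f' := B.e (p+1)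
        set Z := B.Yi p ^ m
        rw [hpow]
        have hswap : ∀ w : A, bi * (Z * w) = Z * (bi * w) := by
          intro w; rw [← mul_assoc, ← hcommInv, mul_assoc]
        calc f' * (a * Z * ai) * f'
            = f' * (a * (Z * (ai * f'))) := by noncomm_ring
          _ = f' * (a * (Z * (b * (f * (bi * ai))))) := by rw [hR]
          _ = a * (b * (f * (bi * (Z * (b * (f * (bi * ai))))))) := hL _
          _ = a * (b * (f * (Z * (bi * (b * (f * (bi * ai))))))) := by rw [hswap]
          _ = a * (b * (f * (Z * (f * (bi * ai))))) := by
                rw [← mul_assoc bi b, hbib, one_mul]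
          _ = a * (b * ((f * Z * f) * (bi * ai))) := by noncomm_ring
          _ = a * (b * ((B.Acoef m • f) * (bi * ai))) := by rw [eIH]
          _ = B.Acoef m • (a * (b * (f * (bi * ai)))) := by
                rw [smul_mul_assoc, mul_smul_comm, mul_smul_comm]
          _ = B.Acoef m • (a * (ai * f')) := by rw [← hR]
          _ = B.Acoef m • f' := by rw [← mul_assoc, haai, one_mul]
end

section
/- In BB^k_n, with Y_i := X_{i−1}⋯X_1 Y X_1^{-1}⋯X_{i−1}^{-1}, one has Y_i·e_{i−1} = κλ^{-1}·Y_{i−1}^{-1}·e_{i−1} for 2 ≤ i ≤ n. -/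
namespace AKBMWModel

variable {R : Type} [CommRing R] {A : Type} [Ring A] [Algebra R A]
  {n k : ℕ} (B : AKBMWModel R A n k)

lemma Yi_succ_s10 (j : ℕ) (hj : 1 ≤ j) :
    B.Yi (j + 1) = B.X j * B.Yi j * B.Xinv j := by
  obtain ⟨m, rfl⟩ : ∃ m, j = m + 1 := ⟨j - 1, by omega⟩
  rfl

lemma Yiinv_succ (j : ℕ) (hj : 1 ≤ j) :
    B.Yiinv (j + 1) = B.X j * B.Yiinv j * B.Xinv j := by
  obtain ⟨m, rfl⟩ : ∃ m, j = m + 1 := ⟨j - 1, by omega⟩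
  rfl

lemma Xinv_e (i : ℕ) (h1 : 1 ≤ i) (h2 : i ≤ n - 1) :
    B.Xinv i * B.e i = B.laminv • B.e i := by
  have h : B.laminv • (B.lam • B.e i) = B.e i := by
    rw [smul_smul, mul_comm, B.lam_laminv, one_smul]
  calc B.Xinv i * B.e i = B.Xinv i * (B.laminv • (B.lam • B.e i)) := by rw [h]
    _ = B.laminv • (B.Xinv i * (B.lam • B.e i)) := mul_smul_comm _ _ _
    _ = B.laminv • (B.Xinv i * (B.X i * B.e i)) := by rw [B.Xe i h1 h2]
    _ = B.laminv • ((B.Xinv i * B.X i) * B.e i) := by rw [mul_assoc]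
    _ = B.laminv • B.e i := by rw [B.Xinv_X i h1 h2, one_mul]

/-- If `w` commutes with `X p`, it commutes with `Xinv p`. -/
lemma comm_Xinv (p : ℕ) (h1 : 1 ≤ p) (h2 : p ≤ n - 1) (w : A)
    (h : w * B.X p = B.X p * w) : w * B.Xinv p = B.Xinv p * w := by
  calc w * B.Xinv p = (B.Xinv p * B.X p) * (w * B.Xinv p) := by
        rw [B.Xinv_X p h1 h2, one_mul]
    _ = B.Xinv p * ((X B p * w) * B.Xinv p) := by noncomm_ring
    _ = B.Xinv p * ((w * X B p) * B.Xinv p) := by rw [h]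
    _ = (B.Xinv p * w) * (X B p * B.Xinv p) := by noncomm_ring
    _ = B.Xinv p * w := by rw [B.X_Xinv p h1 h2, mul_one]

/-- `X m` commutes with `Y_j` for `j < m`. -/
lemma X_comm_Yi (m : ℕ) (hm : m ≤ n - 1) :
    ∀ j, 1 ≤ j → j < m → B.X m * B.Yi j = B.Yi j * B.X m := by
  intro j
  induction j with
  | zero => intro h; omega
  | succ p ih =>
    intro _ hlt
    rcases Nat.eq_zero_or_pos p with hp | hp
    · subst hp
      exact (B.YXcomm m (by omega) hm).symm
    · have hpm : p < m := by omega
      have hpn : p ≤ n - 1 := by omega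
      have hY : B.X m * B.Yi p = B.Yi p * B.X m := ih hp hpm
      have hX : B.X m * B.X p = B.X p * B.X m := by
        refine B.Xcomm m p (by omega) hm hp hpn ?_
        unfold Nat.dist; omega
      have hXi : B.X m * B.Xinv p = B.Xinv p * B.X m :=
        B.comm_Xinv p hp hpn _ hX
      rw [B.Yi_succ_s10 p hp]
      calc B.X m * (B.X p * B.Yi p * B.Xinv p)
          = (B.X m * B.X p) * B.Yi p * B.Xinv p := by noncomm_ring
        _ = B.X p * (B.X m * B.Yi p) * B.Xinv p := by rw [hX]; noncomm_ring
        _ = B.X p * B.Yi p * (B.X m * B.Xinv p) := by rw [hY]; noncomm_ring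
        _ = B.X p * B.Yi p * B.Xinv p * B.X m := by rw [hXi]; noncomm_ring

lemma Yi_mul_Yiinv (j : ℕ) (hj : j ≤ n) :
    B.Yi j * B.Yiinv j = 1 ∧ B.Yiinv j * B.Yi j = 1 := by
  induction j with
  | zero => exact ⟨B.Y_Yinv, B.Yinv_Y⟩
  | succ p ih =>
    rcases Nat.eq_zero_or_pos p with hp | hp
    · subst hp; exact ⟨B.Y_Yinv, B.Yinv_Y⟩
    · obtain ⟨h1, h2⟩ := ih (by omega)
      have hp2 : p ≤ n - 1 := by omega
      rw [B.Yi_succ_s10 p hp, B.Yiinv_succ p hp]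
      constructor
      · calc B.X p * B.Yi p * B.Xinv p * (B.X p * B.Yiinv p * B.Xinv p)
            = B.X p * (B.Yi p * ((B.Xinv p * B.X p) * B.Yiinv p)) * B.Xinv p := by
              noncomm_ring
          _ = B.X p * (B.Yi p * B.Yiinv p) * B.Xinv p := by
              rw [B.Xinv_X p hp hp2, one_mul]
          _ = B.X p * B.Xinv p := by rw [h1, mul_one]
          _ = 1 := B.X_Xinv p hp hp2
      · calc B.X p * B.Yiinv p * B.Xinv p * (B.X p * B.Yi p * B.Xinv p)
            = B.X p * (B.Yiinv p * ((B.Xinv p * B.X p) * B.Yi p)) * B.Xinv p := by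
              noncomm_ring
          _ = B.X p * (B.Yiinv p * B.Yi p) * B.Xinv p := by
              rw [B.Xinv_X p hp hp2, one_mul]
          _ = B.X p * B.Xinv p := by rw [h2, mul_one]
          _ = 1 := B.X_Xinv p hp hp2

/-- Key relation: `Y_j X_j Y_j e_j = κ e_j`. -/
lemma YiXYie : ∀ j, 1 ≤ j → j ≤ n - 1 →
    B.Yi j * B.X j * B.Yi j * B.e j = B.κ • B.e j := by
  intro j
  induction j with
  | zero => omega
  | succ p ih =>
    intro _ h2
    rcases Nat.eq_zero_or_pos p with hp | hp
    · subst hp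
      exact B.YXYe (by omega)
    · -- inductive step: p ≥ 1, p + 1 ≤ n - 1
      have hpn : p ≤ n - 1 := by omega
      have hp1n : 1 ≤ p + 1 := by omega
      have hdist : Nat.dist p (p + 1) = 1 := by unfold Nat.dist; omega
      have hdist' : Nat.dist (p + 1) p = 1 := by unfold Nat.dist; omega
      set a := B.X p with ha
      set a' := B.Xinv p with ha'
      set b := B.X (p + 1) with hb
      set b' := B.Xinv (p + 1) with hb'
      set y := B.Yi p with hy
      set e1 := B.e p with he1
      set e2 := B.e (p + 1) with he2
      have haa' : a * a' = 1 := B.X_Xinv p hp hpn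
      have ha'a : a' * a = 1 := B.Xinv_X p hp hpn
      have hbb' : b * b' = 1 := B.X_Xinv (p + 1) hp1n h2
      have hbraid : a * b * a = b * a * b := B.braid p (p + 1) hp hpn hp1n h2 hdist
      have hcomm : b * y = y * b := B.X_comm_Yi (p + 1) h2 p hp (by omega)
      have hcomm' : b' * y = y * b' := by
        have := B.comm_Xinv (p + 1) hp1n h2 y hcomm.symm
        exact this.symm
      have hconj : a' * b * a = b * a * b' := by
        calc a' * b * a = a' * b * a * (b * b') := by rw [hbb', mul_one]
          _ = a' * (b * a * b) * b' := by noncomm_ring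
          _ = a' * (a * b * a) * b' := by rw [hbraid]
          _ = (a' * a) * (b * a * b') := by noncomm_ring
          _ = b * a * b' := by rw [ha'a, one_mul]
      have heinv : e1 * (b' * a') = b' * a' * e2 :=
        B.eXinvXinv p (p + 1) hp hpn hp1n h2 hdist
      have heXX : e2 * (a * b) = a * b * e1 :=
        B.eXX (p + 1) p hp1n h2 hp hpn hdist'
      have ihk : y * a * y * e1 = B.κ • e1 := ih hp hpn
      rw [B.Yi_succ_s10 p hp]
      calc a * y * a' * b * (a * y * a') * e2
          = a * y * (a' * b * a) * (y * (a' * e2)) := by noncomm_ring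
        _ = a * y * (b * a * b') * (y * (a' * e2)) := by rw [hconj]
        _ = a * (y * b) * a * (b' * y) * (a' * e2) := by noncomm_ring
        _ = a * (b * y) * a * (y * b') * (a' * e2) := by rw [hcomm, hcomm']
        _ = (a * b) * (y * a * y) * (e1 * (b' * a')) := by rw [heinv]; noncomm_ring
        _ = (a * b) * ((y * a * y * e1) * (b' * a')) := by noncomm_ring
        _ = (a * b) * ((B.κ • e1) * (b' * a')) := by rw [ihk]
        _ = B.κ • ((a * b) * (e1 * (b' * a'))) := by
            rw [smul_mul_assoc, mul_smul_comm]
        _ = B.κ • (((a * b) * e1) * (b' * a')) := by congr 1; noncomm_ring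
        _ = B.κ • ((e2 * (a * b)) * (b' * a')) := by rw [heXX]
        _ = B.κ • e2 := by
            have : (e2 * (a * b)) * (b' * a') = e2 := by
              calc (e2 * (a * b)) * (b' * a') = e2 * (a * ((b * b') * a')) := by
                    noncomm_ring
                _ = e2 * (a * a') := by rw [hbb', one_mul]
                _ = e2 := by rw [haa', mul_one]
            rw [this]

end AKBMWModel

/-- In `BB^k_n`, with `Y_i := X_{i−1}⋯X_1 Y X_1⁻¹⋯X_{i−1}⁻¹`, one has
`Y_i e_{i−1} = κ λ⁻¹ Y_{i−1}⁻¹ e_{i−1}` for `2 ≤ i ≤ n`. -/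
theorem stmt10 {R : Type} [CommRing R] [IsDomain R] {A : Type} [Ring A] [Algebra R A]
    {n k : ℕ} (B : AKBMWModel R A n k) (i : ℕ) (h1 : 2 ≤ i) (h2 : i ≤ n) :
    B.Yi i * B.e (i - 1) = (B.κ * B.laminv) • (B.Yiinv (i - 1) * B.e (i - 1)) := by
  obtain ⟨j, rfl⟩ : ∃ j, i = j + 1 := ⟨i - 1, by omega⟩
  have hj1 : 1 ≤ j := by omega
  have hjn : j ≤ n - 1 := by omega
  simp only [Nat.add_sub_cancel]
  have hkey := B.YiXYie j hj1 hjn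
  have hinv := (B.Yi_mul_Yiinv j (by omega)).2
  have hstep : B.X j * B.Yi j * B.e j = B.κ • (B.Yiinv j * B.e j) := by
    calc B.X j * B.Yi j * B.e j
        = (B.Yiinv j * B.Yi j) * (B.X j * B.Yi j * B.e j) := by rw [hinv, one_mul]
      _ = B.Yiinv j * (B.Yi j * B.X j * B.Yi j * B.e j) := by noncomm_ring
      _ = B.Yiinv j * (B.κ • B.e j) := by rw [hkey]
      _ = B.κ • (B.Yiinv j * B.e j) := mul_smul_comm _ _ _
  rw [B.Yi_succ_s10 j hj1]
  calc B.X j * B.Yi j * B.Xinv j * B.e j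
      = B.X j * B.Yi j * (B.Xinv j * B.e j) := by rw [mul_assoc]
    _ = B.X j * B.Yi j * (B.laminv • B.e j) := by rw [B.Xinv_e j hj1 hjn]
    _ = B.laminv • (B.X j * B.Yi j * B.e j) := by rw [mul_smul_comm]
    _ = B.laminv • (B.κ • (B.Yiinv j * B.e j)) := by rw [hstep]
    _ = (B.κ * B.laminv) • (B.Yiinv j * B.e j) := by rw [smul_smul, mul_comm]
end

section
/- The quotient of BB^k_n by the two-sided ideal I_n generated by e_{n−1} is isomorphic to the Ariki–Koike algebra AK^k_n; moreover I_n equals the ideal generated by any single e_i (1 ≤ i ≤ n−1). -/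
/-- Generators of the Ariki–Koike–Birman–Murakami–Wenzl algebra `BB^k_n`:
the braid generators `X_i` and their inverses, the idempotent-type generators
`e_i`, and the cylinder generator `Y` with its inverse. -/
inductive BBGen where
  | X (i : ℕ)
  | Xinv (i : ℕ)
  | e (i : ℕ)
  | Y
  | Yinv

namespace BBGen

variable (R : Type) [CommRing R]

/-- The canonical image of a generator in the free algebra. -/
noncomputable abbrev g (a : BBGen) : FreeAlgebra R BBGen := FreeAlgebra.ι R a

/-- The defining relations of the Ariki–Koike–BMW algebra `BB^k_n(R)` with
parameters `x, λ, λ⁻¹, δ, κ, κ⁻¹`, `p_0, …, p_{k−1}` (with inverses) and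
`A_1, …, A_{k−1}`. -/
inductive BBRel (n k : ℕ) (x lam laminv δ κ κinv : R) (p pinv Acoef : ℕ → R) :
    FreeAlgebra R BBGen → FreeAlgebra R BBGen → Prop
  | X_Xinv : ∀ i, 1 ≤ i → i ≤ n - 1 →
      BBRel n k x lam laminv δ κ κinv p pinv Acoef (g R (X i) * g R (Xinv i)) 1
  | Xinv_X : ∀ i, 1 ≤ i → i ≤ n - 1 →
      BBRel n k x lam laminv δ κ κinv p pinv Acoef (g R (Xinv i) * g R (X i)) 1
  | Y_Yinv : BBRel n k x lam laminv δ κ κinv p pinv Acoef (g R Y * g R Yinv) 1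
  | Yinv_Y : BBRel n k x lam laminv δ κ κinv p pinv Acoef (g R Yinv * g R Y) 1
  | Xcomm : ∀ i j, 1 ≤ i → i ≤ n - 1 → 1 ≤ j → j ≤ n - 1 → 1 < Nat.dist i j →
      BBRel n k x lam laminv δ κ κinv p pinv Acoef
        (g R (X i) * g R (X j)) (g R (X j) * g R (X i))
  | braid : ∀ i j, 1 ≤ i → i ≤ n - 1 → 1 ≤ j → j ≤ n - 1 → Nat.dist i j = 1 →
      BBRel n k x lam laminv δ κ κinv p pinv Acoef
        (g R (X i) * g R (X j) * g R (X i)) (g R (X j) * g R (X i) * g R (X j))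
  | Xe : ∀ i, 1 ≤ i → i ≤ n - 1 →
      BBRel n k x lam laminv δ κ κinv p pinv Acoef
        (g R (X i) * g R (e i)) (lam • g R (e i))
  | eX : ∀ i, 1 ≤ i → i ≤ n - 1 →
      BBRel n k x lam laminv δ κ κinv p pinv Acoef
        (g R (e i) * g R (X i)) (lam • g R (e i))
  | eXe : ∀ i j, 1 ≤ i → i ≤ n - 1 → 1 ≤ j → j ≤ n - 1 → Nat.dist i j = 1 →
      BBRel n k x lam laminv δ κ κinv p pinv Acoef
        (g R (e i) * g R (X j) * g R (e i)) (laminv • g R (e i))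
  | eXinve : ∀ i j, 1 ≤ i → i ≤ n - 1 → 1 ≤ j → j ≤ n - 1 → Nat.dist i j = 1 →
      BBRel n k x lam laminv δ κ κinv p pinv Acoef
        (g R (e i) * g R (Xinv j) * g R (e i)) (lam • g R (e i))
  | ee : ∀ i, 1 ≤ i → i ≤ n - 1 →
      BBRel n k x lam laminv δ κ κinv p pinv Acoef
        (g R (e i) * g R (e i)) (x • g R (e i))
  | Xinv_eq : ∀ i, 1 ≤ i → i ≤ n - 1 →
      BBRel n k x lam laminv δ κ κinv p pinv Acoef
        (g R (Xinv i)) (g R (X i) - δ • 1 + δ • g R (e i))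
  | ecomm : ∀ i j, 1 ≤ i → i ≤ n - 1 → 1 ≤ j → j ≤ n - 1 → 1 < Nat.dist i j →
      BBRel n k x lam laminv δ κ κinv p pinv Acoef
        (g R (e i) * g R (e j)) (g R (e j) * g R (e i))
  | eXX : ∀ i j, 1 ≤ i → i ≤ n - 1 → 1 ≤ j → j ≤ n - 1 → Nat.dist i j = 1 →
      BBRel n k x lam laminv δ κ κinv p pinv Acoef
        (g R (e i) * (g R (X j) * g R (X i))) (g R (X j) * g R (X i) * g R (e j))
  | eXinvXinv : ∀ i j, 1 ≤ i → i ≤ n - 1 → 1 ≤ j → j ≤ n - 1 → Nat.dist i j = 1 →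
      BBRel n k x lam laminv δ κ κinv p pinv Acoef
        (g R (e i) * (g R (Xinv j) * g R (Xinv i)))
        (g R (Xinv j) * g R (Xinv i) * g R (e j))
  | eee : ∀ i j, 1 ≤ i → i ≤ n - 1 → 1 ≤ j → j ≤ n - 1 → Nat.dist i j = 1 →
      BBRel n k x lam laminv δ κ κinv p pinv Acoef
        (g R (e i) * g R (e j) * g R (e i)) (g R (e i))
  | fourBraid : 2 ≤ n →
      BBRel n k x lam laminv δ κ κinv p pinv Acoef
        (g R (X 1) * g R Y * g R (X 1) * g R Y) (g R Y * g R (X 1) * g R Y * g R (X 1))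
  | YXcomm : ∀ i, 2 ≤ i → i ≤ n - 1 →
      BBRel n k x lam laminv δ κ κinv p pinv Acoef
        (g R Y * g R (X i)) (g R (X i) * g R Y)
  | YXYe : 2 ≤ n →
      BBRel n k x lam laminv δ κ κinv p pinv Acoef
        (g R Y * g R (X 1) * g R Y * g R (e 1)) (κ • g R (e 1))
  | Ypoly :
      BBRel n k x lam laminv δ κ κinv p pinv Acoef
        (((List.range k).map
          (fun i => g R Y - algebraMap R (FreeAlgebra R BBGen) (p i))).prod) 0
  | eYe : ∀ m, 2 ≤ n → 1 ≤ m → m ≤ k - 1 →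
      BBRel n k x lam laminv δ κ κinv p pinv Acoef
        (g R (e 1) * g R Y ^ m * g R (e 1)) (Acoef m • g R (e 1))

end BBGen

/-- The Ariki–Koike–Birman–Murakami–Wenzl algebra `BB^k_n(R)`, presented by the
generators `Y, X_i, e_i` (and the inverses of `Y` and the `X_i`) modulo the
defining relations. -/
noncomputable def BB (R : Type) [CommRing R] (n k : ℕ)
    (x lam laminv δ κ κinv : R) (p pinv Acoef : ℕ → R) : Type :=
  RingQuot (BBGen.BBRel R n k x lam laminv δ κ κinv p pinv Acoef)

namespace BB

variable {R : Type} [CommRing R] {n k : ℕ}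
  {x lam laminv δ κ κinv : R} {p pinv Acoef : ℕ → R}

noncomputable instance : Ring (BB R n k x lam laminv δ κ κinv p pinv Acoef) :=
  inferInstanceAs (Ring (RingQuot _))

noncomputable instance : Algebra R (BB R n k x lam laminv δ κ κinv p pinv Acoef) :=
  inferInstanceAs (Algebra R (RingQuot _))

/-- The image of a generator in `BB^k_n(R)`. -/
noncomputable def gen (a : BBGen) : BB R n k x lam laminv δ κ κinv p pinv Acoef :=
  RingQuot.mkAlgHom R (BBGen.BBRel R n k x lam laminv δ κ κinv p pinv Acoef)
    (FreeAlgebra.ι R a)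

end BB

namespace BB

variable {R : Type} [CommRing R] {n k : ℕ}
  {x lam laminv δ κ κinv : R} {p pinv Acoef : ℕ → R}

/-- `Y_i = X_{i-1} ⋯ X_1 Y X_1⁻¹ ⋯ X_{i-1}⁻¹` in `BB^k_n(R)`. -/
noncomputable def Yi (i : ℕ) : BB R n k x lam laminv δ κ κinv p pinv Acoef :=
  conjIter (fun j => gen (BBGen.X j)) (fun j => gen (BBGen.Xinv j)) (gen BBGen.Y) i

end BB

/-- Generators `X_0, X_1, …` of the Ariki–Koike algebra (`T i` stands for `X_i`). -/
inductive AKGen where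
  | T (i : ℕ)

namespace AKGen

variable (R : Type) [CommRing R]

/-- The canonical image of a generator in the free algebra. -/
noncomputable abbrev g (a : AKGen) : FreeAlgebra R AKGen := FreeAlgebra.ι R a

/-- The defining relations of the Ariki–Koike algebra `AK^k_n(R)` with
parameters `δ` and `p_0, …, p_{k−1}`. -/
inductive AKRel (n k : ℕ) (δ : R) (p : ℕ → R) :
    FreeAlgebra R AKGen → FreeAlgebra R AKGen → Prop
  | fourBraid : 2 ≤ n →
      AKRel n k δ p (g R (T 0) * g R (T 1) * g R (T 0) * g R (T 1))
        (g R (T 1) * g R (T 0) * g R (T 1) * g R (T 0))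
  | comm : ∀ i j, i ≤ n - 1 → j ≤ n - 1 → 1 < Nat.dist i j →
      AKRel n k δ p (g R (T i) * g R (T j)) (g R (T j) * g R (T i))
  | braid : ∀ i j, 1 ≤ i → i ≤ n - 1 → 1 ≤ j → j ≤ n - 1 → Nat.dist i j = 1 →
      AKRel n k δ p (g R (T i) * g R (T j) * g R (T i))
        (g R (T j) * g R (T i) * g R (T j))
  | quad : ∀ i, 1 ≤ i → i ≤ n - 1 →
      AKRel n k δ p (g R (T i) * g R (T i)) (δ • g R (T i) + 1)
  | poly :
      AKRel n k δ p
        (((List.range k).map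
          (fun i => g R (T 0) - algebraMap R (FreeAlgebra R AKGen) (p i))).prod) 0

end AKGen

/-- The Ariki–Koike algebra `AK^k_n(R)`. -/
noncomputable def AK (R : Type) [CommRing R] (n k : ℕ) (δ : R) (p : ℕ → R) : Type :=
  RingQuot (AKGen.AKRel R n k δ p)

noncomputable instance {R : Type} [CommRing R] {n k : ℕ} {δ : R} {p : ℕ → R} :
    Ring (AK R n k δ p) :=
  inferInstanceAs (Ring (RingQuot _))

noncomputable instance {R : Type} [CommRing R] {n k : ℕ} {δ : R} {p : ℕ → R} :
    Algebra R (AK R n k δ p) :=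
  inferInstanceAs (Algebra R (RingQuot _))

/-! Modulo `e_{n-1}` every `e_i` vanishes, because `e_i = e_i e_j e_i` for adjacent `i, j`. Once
the `e_i` vanish, the relation `X_i⁻¹ = X_i - δ + δ e_i` turns into the quadratic relation
`X_i² = δ X_i + 1`, every other relation involving an `e_i` becomes trivial, and the remaining ones
are the defining relations of `AK^k_n` under `Y ↦ X_0`, `X_i ↦ X_i`. So these assignments give
mutually inverse maps `BB^k_n / I_n ⇄ AK^k_n`; `Y⁻¹` goes to `X_0⁻¹`, which exists because
`∏ (X_0 - p_i) = 0` has invertible constant term. -/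

open Polynomial in
theorem isUnit_of_aeval_eq_zero {R A : Type*} [CommRing R] [Ring A] [Algebra R A] {a : A}
    {P : R[X]} (hP : aeval a P = 0) (h0 : IsUnit (P.coeff 0)) : IsUnit a := by
  have hc : algebraMap R A (↑h0.unit⁻¹ * P.coeff 0) = 1 := by simp
  have hleft : a * aeval a P.divX = -algebraMap R A (P.coeff 0) := by
    have h := congrArg (aeval a) (X_mul_divX_add P)
    rw [map_add, map_mul, aeval_X, aeval_C, hP] at h
    exact eq_neg_of_add_eq_zero_left h
  have hright : aeval a P.divX * a = -algebraMap R A (P.coeff 0) := by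
    have h := congrArg (aeval a) (divX_mul_X_add P)
    rw [map_add, map_mul, aeval_X, aeval_C, hP] at h
    exact eq_neg_of_add_eq_zero_left h
  refine isUnit_iff_exists.mpr ⟨-(↑h0.unit⁻¹ : R) • aeval a P.divX, ?_, ?_⟩
  · rw [mul_smul_comm, hleft, neg_smul, smul_neg, neg_neg, Algebra.smul_def, ← map_mul, hc]
  · rw [smul_mul_assoc, hright, neg_smul, smul_neg, neg_neg, Algebra.smul_def, ← map_mul, hc]

theorem TwoSidedIdeal.span_singleton_ringCon_le_ker {A B : Type*} [Ring A] [Ring B]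
    (f : A →+* B) {a : A} (ha : f a = 0) : (span {a}).ringCon ≤ RingCon.ker f := by
  intro y z hyz
  have hle : span {a} ≤ ker f := span_le.mpr (by simpa [mem_ker] using ha)
  rw [RingCon.ker_apply, ← sub_eq_zero, ← map_sub]
  exact (mem_ker f).mp (hle ((rel_iff _ _ _).mp hyz))

theorem TwoSidedIdeal.mem_span_singleton_of_eq_mul_mul {A : Type*} [Ring A] {a b u v : A}
    (h : a = u * b * v) : a ∈ span {b} :=
  h ▸ mul_mem_right _ _ _ (mul_mem_left _ _ _ (subset_span rfl))

namespace AK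

variable {R : Type} [CommRing R] {n k : ℕ} {δ : R} {p : ℕ → R}

local notation "𝓐" => AK R n k δ p
local notation "𝓡" => AKGen.AKRel R n k δ p

noncomputable def T (m : ℕ) : 𝓐 := RingQuot.mkAlgHom R 𝓡 (FreeAlgebra.ι R (AKGen.T m))

theorem mkAlgHom_rel {a b : FreeAlgebra R AKGen} (h : 𝓡 a b) :
    (RingQuot.mkAlgHom R 𝓡 a : 𝓐) = RingQuot.mkAlgHom R 𝓡 b :=
  RingQuot.mkAlgHom_rel R h

theorem T_mul_T_comm {i j : ℕ} (hi : i ≤ n - 1) (hj : j ≤ n - 1) (hd : 1 < Nat.dist i j) :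
    (T i : 𝓐) * T j = T j * T i := by
  have h : (_ : 𝓐) = _ := mkAlgHom_rel (.comm i j hi hj hd)
  simp only [map_mul] at h
  exact h

theorem T_braid {i j : ℕ} (hi1 : 1 ≤ i) (hi2 : i ≤ n - 1) (hj1 : 1 ≤ j) (hj2 : j ≤ n - 1)
    (hd : Nat.dist i j = 1) : (T i : 𝓐) * T j * T i = T j * T i * T j := by
  have h : (_ : 𝓐) = _ := mkAlgHom_rel (.braid i j hi1 hi2 hj1 hj2 hd)
  simp only [map_mul] at h
  exact h

theorem T_fourBraid (hn : 2 ≤ n) :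
    (T 0 : 𝓐) * T 1 * T 0 * T 1 = T 1 * T 0 * T 1 * T 0 := by
  have h : (_ : 𝓐) = _ := mkAlgHom_rel (.fourBraid hn)
  simp only [map_mul] at h
  exact h

theorem T_mul_self {i : ℕ} (hi1 : 1 ≤ i) (hi2 : i ≤ n - 1) :
    (T i : 𝓐) * T i = δ • T i + 1 := by
  have h : (_ : 𝓐) = _ := mkAlgHom_rel (.quad i hi1 hi2)
  simp only [map_mul, map_add, map_smul, map_one] at h
  exact h

theorem prod_T_zero_sub :
    ((List.range k).map fun i => (T 0 : 𝓐) - algebraMap R 𝓐 (p i)).prod = 0 := by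
  have h : (_ : 𝓐) = _ := mkAlgHom_rel .poly
  simp only [map_list_prod, List.map_map, Function.comp_def, map_sub, AlgHom.commutes,
    map_zero] at h
  exact h

theorem isUnit_T_zero (hp : ∀ i < k, IsUnit (p i)) : IsUnit (T 0 : 𝓐) := by
  set P : Polynomial R := ((List.range k).map fun i => Polynomial.X - Polynomial.C (p i)).prod
  refine isUnit_of_aeval_eq_zero (P := P) ?_ ?_
  · simpa [P, map_list_prod, Function.comp_def] using prod_T_zero_sub
  · rw [Polynomial.coeff_zero_eq_eval_zero, Polynomial.eval_list_prod]
    refine List.prod_isUnit fun r hr => ?_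
    simp only [List.map_map, List.mem_map, List.mem_range] at hr
    obtain ⟨i, hi, rfl⟩ := hr
    simpa using (hp i hi).neg

theorem algHom_ext {A : Type} [Semiring A] [Algebra R A] {f g : 𝓐 →ₐ[R] A}
    (h : ∀ m, f (T m) = g (T m)) : f = g := by
  refine RingQuot.ringQuot_ext' R f g (FreeAlgebra.hom_ext (funext fun a => ?_))
  cases a with | T m => exact h m

noncomputable def lift {A : Type} [Semiring A] [Algebra R A] (f : AKGen → A)
    (hf : ∀ ⦃a b⦄, 𝓡 a b → FreeAlgebra.lift R f a = FreeAlgebra.lift R f b) : 𝓐 →ₐ[R] A :=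
  RingQuot.liftAlgHom R ⟨FreeAlgebra.lift R f, hf⟩

theorem lift_T {A : Type} [Semiring A] [Algebra R A] (f : AKGen → A)
    (hf : ∀ ⦃a b⦄, 𝓡 a b → FreeAlgebra.lift R f a = FreeAlgebra.lift R f b) (m : ℕ) :
    lift f hf (T m) = f (AKGen.T m) :=
  (RingQuot.liftAlgHom_mkAlgHom_apply R _ hf _).trans (FreeAlgebra.lift_ι_apply f _)

end AK

namespace BBGen

/- The generators `X_i, X_i⁻¹, e_i` with `i ∉ [1, n-1]` occur in no defining relation, nor do the
generators `T m`, `m ≥ n`, of `AK`. The isomorphism matches these two countably infinite families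
through an arbitrary bijection `σ`. -/
def IsFree (n : ℕ) : BBGen → Prop
  | X i | Xinv i | e i => ¬(1 ≤ i ∧ i ≤ n - 1)
  | Y | Yinv => False

instance : Countable BBGen := by
  let f : BBGen → ℕ × ℕ
    | X i => (0, i) | Xinv i => (1, i) | e i => (2, i) | Y => (3, 0) | Yinv => (4, 0)
  refine Function.Injective.countable (f := f) fun a b hab => ?_
  cases a <;> cases b <;> simp_all [f]

instance (n : ℕ) : Infinite {a // IsFree n a} :=
  Infinite.of_injective (fun i => ⟨X (n + i), by simp only [IsFree]; omega⟩)
    fun i j hij => by simpa using hij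

end BBGen

namespace BB

open BBGen

variable {R : Type} [CommRing R] {n k : ℕ} {x lam laminv δ κ κinv : R} {p pinv Acoef : ℕ → R}

local notation "𝓑" => BB R n k x lam laminv δ κ κinv p pinv Acoef
local notation "𝓡" => BBRel R n k x lam laminv δ κ κinv p pinv Acoef
local notation "𝓐" => AK R n k δ p
local notation "𝓘" => TwoSidedIdeal.span {(gen (e (n - 1)) : 𝓑)}
local notation "𝓠" => RingCon.Quotient (TwoSidedIdeal.ringCon 𝓘)

theorem mkAlgHom_rel {a b : FreeAlgebra R BBGen} (h : 𝓡 a b) :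
    (RingQuot.mkAlgHom R 𝓡 a : 𝓑) = RingQuot.mkAlgHom R 𝓡 b :=
  RingQuot.mkAlgHom_rel R h

theorem gen_X_mul_gen_Xinv {i : ℕ} (hi1 : 1 ≤ i) (hi2 : i ≤ n - 1) :
    (gen (X i) : 𝓑) * gen (Xinv i) = 1 := by
  have h : (_ : 𝓑) = _ := mkAlgHom_rel (.X_Xinv i hi1 hi2)
  simp only [map_mul, map_one] at h
  exact h

theorem gen_Yinv_mul_gen_Y : (gen Yinv : 𝓑) * gen Y = 1 := by
  have h : (_ : 𝓑) = _ := mkAlgHom_rel .Yinv_Y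
  simp only [map_mul, map_one] at h
  exact h

theorem gen_Xinv {i : ℕ} (hi1 : 1 ≤ i) (hi2 : i ≤ n - 1) :
    (gen (Xinv i) : 𝓑) = gen (X i) - δ • 1 + δ • gen (e i) := by
  have h : (_ : 𝓑) = _ := mkAlgHom_rel (.Xinv_eq i hi1 hi2)
  simp only [map_add, map_sub, map_smul, map_one] at h
  exact h

theorem gen_X_mul_self {i : ℕ} (hi1 : 1 ≤ i) (hi2 : i ≤ n - 1) :
    (gen (X i) : 𝓑) * gen (X i) = δ • gen (X i) + 1 - δ • (gen (X i) * gen (e i)) := by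
  have h : (_ : 𝓑) = _ := gen_X_mul_gen_Xinv hi1 hi2
  rw [gen_Xinv hi1 hi2, mul_add, mul_sub, mul_smul_comm, mul_smul_comm, mul_one] at h
  rw [← h]
  abel

theorem gen_X_mul_gen_X_comm {i j : ℕ} (hi1 : 1 ≤ i) (hi2 : i ≤ n - 1) (hj1 : 1 ≤ j)
    (hj2 : j ≤ n - 1) (hd : 1 < Nat.dist i j) :
    (gen (X i) : 𝓑) * gen (X j) = gen (X j) * gen (X i) := by
  have h : (_ : 𝓑) = _ := mkAlgHom_rel (.Xcomm i j hi1 hi2 hj1 hj2 hd)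
  simp only [map_mul] at h
  exact h

theorem gen_X_braid {i j : ℕ} (hi1 : 1 ≤ i) (hi2 : i ≤ n - 1) (hj1 : 1 ≤ j) (hj2 : j ≤ n - 1)
    (hd : Nat.dist i j = 1) :
    (gen (X i) : 𝓑) * gen (X j) * gen (X i) = gen (X j) * gen (X i) * gen (X j) := by
  have h : (_ : 𝓑) = _ := mkAlgHom_rel (.braid i j hi1 hi2 hj1 hj2 hd)
  simp only [map_mul] at h
  exact h

theorem gen_fourBraid (hn : 2 ≤ n) :
    (gen (X 1) : 𝓑) * gen Y * gen (X 1) * gen Y = gen Y * gen (X 1) * gen Y * gen (X 1) := by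
  have h : (_ : 𝓑) = _ := mkAlgHom_rel (.fourBraid hn)
  simp only [map_mul] at h
  exact h

theorem gen_Y_mul_gen_X_comm {i : ℕ} (hi1 : 2 ≤ i) (hi2 : i ≤ n - 1) :
    (gen Y : 𝓑) * gen (X i) = gen (X i) * gen Y := by
  have h : (_ : 𝓑) = _ := mkAlgHom_rel (.YXcomm i hi1 hi2)
  simp only [map_mul] at h
  exact h

theorem prod_gen_Y_sub :
    ((List.range k).map fun i => (gen Y : 𝓑) - algebraMap R 𝓑 (p i)).prod = 0 := by
  have h : (_ : 𝓑) = _ := mkAlgHom_rel .Ypoly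
  simp only [map_list_prod, List.map_map, Function.comp_def, map_sub, AlgHom.commutes,
    map_zero] at h
  exact h

theorem gen_e_eq_mul_mul {i j : ℕ} (hi1 : 1 ≤ i) (hi2 : i ≤ n - 1) (hj1 : 1 ≤ j)
    (hj2 : j ≤ n - 1) (hd : Nat.dist i j = 1) :
    (gen (e i) : 𝓑) = gen (e i) * gen (e j) * gen (e i) := by
  have h : (_ : 𝓑) = _ := mkAlgHom_rel (.eee i j hi1 hi2 hj1 hj2 hd)
  simp only [map_mul] at h
  exact h.symm

theorem algHom_ext {A : Type} [Semiring A] [Algebra R A] {f g : 𝓑 →ₐ[R] A}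
    (h : ∀ a, f (gen a) = g (gen a)) : f = g :=
  RingQuot.ringQuot_ext' R f g (FreeAlgebra.hom_ext (funext h))

noncomputable def lift {A : Type} [Semiring A] [Algebra R A] (f : BBGen → A)
    (hf : ∀ ⦃a b⦄, 𝓡 a b → FreeAlgebra.lift R f a = FreeAlgebra.lift R f b) : 𝓑 →ₐ[R] A :=
  RingQuot.liftAlgHom R ⟨FreeAlgebra.lift R f, hf⟩

theorem lift_gen {A : Type} [Semiring A] [Algebra R A] (f : BBGen → A)
    (hf : ∀ ⦃a b⦄, 𝓡 a b → FreeAlgebra.lift R f a = FreeAlgebra.lift R f b) (a : BBGen) :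
    lift f hf (gen a : 𝓑) = f a :=
  (RingQuot.liftAlgHom_mkAlgHom_apply R _ hf _).trans (FreeAlgebra.lift_ι_apply f _)

theorem span_gen_e_le {i j : ℕ} (hi1 : 1 ≤ i) (hi2 : i ≤ n - 1) (hj1 : 1 ≤ j)
    (hj2 : j ≤ n - 1) (hd : Nat.dist i j = 1) :
    TwoSidedIdeal.span {(gen (e i) : 𝓑)} ≤ TwoSidedIdeal.span {gen (e j)} :=
  TwoSidedIdeal.span_le.mpr <| Set.singleton_subset_iff.mpr <|
    TwoSidedIdeal.mem_span_singleton_of_eq_mul_mul (gen_e_eq_mul_mul hi1 hi2 hj1 hj2 hd)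

theorem span_gen_e_eq_span_gen_e_one {i : ℕ} (hi1 : 1 ≤ i) (hi2 : i ≤ n - 1) :
    TwoSidedIdeal.span {(gen (e i) : 𝓑)} = TwoSidedIdeal.span {gen (e 1)} := by
  induction i, hi1 using Nat.le_induction with
  | base => rfl
  | succ m hm ih =>
    have hd : Nat.dist (m + 1) m = 1 := by simp [Nat.dist]
    rw [← ih (by omega)]
    exact le_antisymm (span_gen_e_le (by omega) hi2 hm (by omega) hd)
      (span_gen_e_le hm (by omega) (by omega) hi2 (Nat.dist_comm m (m + 1) ▸ hd))

theorem span_gen_e_eq {i : ℕ} (hi1 : 1 ≤ i) (hi2 : i ≤ n - 1) :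
    TwoSidedIdeal.span {(gen (e i) : 𝓑)} = TwoSidedIdeal.span {gen (e (n - 1))} := by
  rw [span_gen_e_eq_span_gen_e_one hi1 hi2, span_gen_e_eq_span_gen_e_one (by omega) le_rfl]

theorem gen_e_mem_span {i : ℕ} (hi1 : 1 ≤ i) (hi2 : i ≤ n - 1) :
    (gen (e i) : 𝓑) ∈ TwoSidedIdeal.span {gen (e (n - 1))} := by
  rw [← span_gen_e_eq hi1 hi2]; exact TwoSidedIdeal.subset_span rfl

variable (σ : {a // IsFree n a} ≃ ℕ)

noncomputable def toAKGen : BBGen → 𝓐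
  | X i => if h : 1 ≤ i ∧ i ≤ n - 1 then AK.T i else AK.T (n + σ ⟨X i, h⟩)
  | Xinv i => if h : 1 ≤ i ∧ i ≤ n - 1 then AK.T i - δ • 1 else AK.T (n + σ ⟨Xinv i, h⟩)
  | e i => if h : 1 ≤ i ∧ i ≤ n - 1 then 0 else AK.T (n + σ ⟨e i, h⟩)
  | Y => AK.T 0
  | Yinv => Ring.inverse (AK.T 0)

theorem toAKGen_of_isFree {a : BBGen} (h : IsFree n a) :
    toAKGen σ a = (AK.T (n + σ ⟨a, h⟩) : 𝓐) := by
  cases a <;> first | exact h.elim | exact dif_neg h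

theorem toAKGen_rel (hT : IsUnit (AK.T 0 : 𝓐)) ⦃a b : FreeAlgebra R BBGen⦄ (h : 𝓡 a b) :
    FreeAlgebra.lift R (toAKGen σ : BBGen → 𝓐) a = FreeAlgebra.lift R (toAKGen σ) b := by
  induction h with
  | X_Xinv i hi1 hi2 => simp [toAKGen, hi1, hi2, mul_sub, AK.T_mul_self hi1 hi2]
  | Xinv_X i hi1 hi2 => simp [toAKGen, hi1, hi2, sub_mul, AK.T_mul_self hi1 hi2]
  | Y_Yinv => simp [toAKGen, Ring.mul_inverse_cancel _ hT]
  | Yinv_Y => simp [toAKGen, Ring.inverse_mul_cancel _ hT]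
  | Xcomm i j hi1 hi2 hj1 hj2 hd =>
    simpa [toAKGen, hi1, hi2, hj1, hj2] using AK.T_mul_T_comm hi2 hj2 hd
  | braid i j hi1 hi2 hj1 hj2 hd =>
    simpa [toAKGen, hi1, hi2, hj1, hj2] using AK.T_braid hi1 hi2 hj1 hj2 hd
  | fourBraid hn =>
    simpa [toAKGen, show 1 ≤ n - 1 by omega] using (AK.T_fourBraid hn).symm
  | YXcomm i hi1 hi2 =>
    simpa [toAKGen, show 1 ≤ i by omega, hi2] using
      (AK.T_mul_T_comm (Nat.zero_le _) hi2 (by rw [Nat.dist_zero_left]; omega) : (_ : 𝓐) = _)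
  | Ypoly => simpa [toAKGen, map_list_prod, Function.comp_def] using AK.prod_T_zero_sub
  | YXYe hn | eYe _ hn => simp [toAKGen, show 1 ≤ n - 1 by omega]
  | _ => simp_all [toAKGen]

noncomputable def ofAKGen : AKGen → 𝓠
  | .T m => ((gen (if m = 0 then Y else if m < n then X m else (σ.symm (m - n)).1) : 𝓑) : 𝓠)

theorem coe_gen_e_eq_zero {i : ℕ} (hi1 : 1 ≤ i) (hi2 : i ≤ n - 1) :
    ((gen (e i) : 𝓑) : 𝓠) = 0 :=
  (RingCon.eq _).mpr ((TwoSidedIdeal.mem_iff _ _).mp (gen_e_mem_span hi1 hi2))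

theorem ofAKGen_rel ⦃a b : FreeAlgebra R AKGen⦄ (h : AKGen.AKRel R n k δ p a b) :
    FreeAlgebra.lift R (ofAKGen σ : AKGen → 𝓠) a = FreeAlgebra.lift R (ofAKGen σ) b := by
  induction h with
  | fourBraid hn =>
    simpa [ofAKGen, show 1 < n by omega] using congrArg ((↑) : 𝓑 → 𝓠) (gen_fourBraid hn).symm
  | comm i j hi hj hd =>
    rcases Nat.eq_zero_or_pos i with rfl | hi0
    · rw [Nat.dist_zero_left] at hd
      simpa [ofAKGen, show j ≠ 0 by omega, show j < n by omega] using
        congrArg ((↑) : 𝓑 → 𝓠) (gen_Y_mul_gen_X_comm hd hj)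
    rcases Nat.eq_zero_or_pos j with rfl | hj0
    · rw [Nat.dist_zero_right] at hd
      simpa [ofAKGen, show i ≠ 0 by omega, show i < n by omega] using
        congrArg ((↑) : 𝓑 → 𝓠) (gen_Y_mul_gen_X_comm hd hi).symm
    simpa [ofAKGen, show i ≠ 0 by omega, show i < n by omega, show j ≠ 0 by omega,
      show j < n by omega] using
      congrArg ((↑) : 𝓑 → 𝓠) (gen_X_mul_gen_X_comm hi0 hi hj0 hj hd)
  | braid i j hi1 hi2 hj1 hj2 hd =>
    simpa [ofAKGen, show i ≠ 0 by omega, show j ≠ 0 by omega, show i < n by omega,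
      show j < n by omega] using congrArg ((↑) : 𝓑 → 𝓠) (gen_X_braid hi1 hi2 hj1 hj2 hd)
  | quad i hi1 hi2 =>
    simpa [ofAKGen, show i ≠ 0 by omega, show i < n by omega, coe_gen_e_eq_zero hi1 hi2] using
      congrArg ((↑) : 𝓑 → 𝓠) (gen_X_mul_self hi1 hi2)
  | poly =>
    simpa [ofAKGen, map_list_prod, Function.comp_def] using congrArg ((↑) : 𝓑 → 𝓠) prod_gen_Y_sub

noncomputable def toAK (hT : IsUnit (AK.T 0 : 𝓐)) : 𝓑 →ₐ[R] 𝓐 :=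
  lift (toAKGen σ) (toAKGen_rel σ hT)

noncomputable def ofAK : 𝓐 →ₐ[R] 𝓠 := AK.lift (ofAKGen σ) (ofAKGen_rel σ)

theorem ofAK_T (m : ℕ) : ofAK σ (AK.T m : 𝓐) =
    ((gen (if m = 0 then Y else if m < n then X m else (σ.symm (m - n)).1) : 𝓑) : 𝓠) :=
  AK.lift_T _ _ m

theorem ofAK_T_zero : ofAK σ (AK.T 0 : 𝓐) = ((gen Y : 𝓑) : 𝓠) :=
  ofAK_T σ 0

theorem ofAK_T_of_pos_of_lt {m : ℕ} (h0 : 0 < m) (hm : m < n) :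
    ofAK σ (AK.T m : 𝓐) = ((gen (X m) : 𝓑) : 𝓠) := by
  rw [ofAK_T, if_neg h0.ne', if_pos hm]

theorem ofAK_T_of_isFree (hn : 1 ≤ n) (a : {a // IsFree n a}) :
    ofAK σ (AK.T (n + σ a) : 𝓐) = ((gen a.1 : 𝓑) : 𝓠) := by
  rw [ofAK_T, if_neg (by omega), if_neg (by omega), Nat.add_sub_cancel_left, σ.symm_apply_apply]

theorem toAK_gen (hT : IsUnit (AK.T 0 : 𝓐)) (a : BBGen) :
    toAK σ hT (gen a : 𝓑) = toAKGen σ a :=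
  lift_gen _ _ a

theorem toAK_gen_e_sub_one (hn : 2 ≤ n) (hT : IsUnit (AK.T 0 : 𝓐)) :
    toAK σ hT (gen (e (n - 1)) : 𝓑) = 0 := by
  rw [toAK_gen, toAKGen, dif_pos ⟨by omega, le_rfl⟩]

noncomputable def quotientToAK (hn : 2 ≤ n) (hT : IsUnit (AK.T 0 : 𝓐)) : 𝓠 →ₐ[R] 𝓐 :=
  RingCon.liftₐ _ (toAK σ hT)
    (TwoSidedIdeal.span_singleton_ringCon_le_ker _ (toAK_gen_e_sub_one σ hn hT))

theorem quotientToAK_comp_mkₐ (hn : 2 ≤ n) (hT : IsUnit (AK.T 0 : 𝓐)) :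
    (quotientToAK σ hn hT).comp (RingCon.mkₐ R (TwoSidedIdeal.ringCon 𝓘)) = toAK σ hT :=
  AlgHom.ext fun _ => rfl

theorem quotientToAK_comp_ofAK (hn : 2 ≤ n) (hT : IsUnit (AK.T 0 : 𝓐)) :
    (quotientToAK σ hn hT).comp (ofAK σ : 𝓐 →ₐ[R] 𝓠) = AlgHom.id R 𝓐 := by
  refine AK.algHom_ext fun m => ?_
  rw [AlgHom.comp_apply, ofAK_T, quotientToAK, RingCon.liftₐ_mk, toAK_gen, AlgHom.id_apply]
  split_ifs with h0 hlt
  · rw [h0]; rfl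
  · exact dif_pos ⟨by omega, by omega⟩
  · rw [toAKGen_of_isFree σ (σ.symm (m - n)).2, Subtype.coe_eta, σ.apply_symm_apply,
      Nat.add_sub_cancel' (by omega)]

theorem ofAK_comp_toAK (hn : 2 ≤ n) (hT : IsUnit (AK.T 0 : 𝓐)) :
    (ofAK σ).comp (toAK σ hT) = RingCon.mkₐ R (TwoSidedIdeal.ringCon 𝓘) := by
  refine algHom_ext fun a => ?_
  rw [AlgHom.comp_apply, toAK_gen, RingCon.mkₐ_apply]
  by_cases ha : IsFree n a
  · rw [toAKGen_of_isFree σ ha, ofAK_T_of_isFree σ (by omega)]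
  cases a with
  | X i =>
    have hi : 1 ≤ i ∧ i ≤ n - 1 := not_not.mp ha
    rw [toAKGen, dif_pos hi, ofAK_T_of_pos_of_lt σ hi.1 (by omega)]
  | Xinv i =>
    have hi : 1 ≤ i ∧ i ≤ n - 1 := not_not.mp ha
    rw [toAKGen, dif_pos hi, gen_Xinv hi.1 hi.2]
    simp [ofAK_T_of_pos_of_lt σ hi.1 (by omega : i < n), coe_gen_e_eq_zero hi.1 hi.2]
  | e i =>
    have hi : 1 ≤ i ∧ i ≤ n - 1 := not_not.mp ha
    rw [toAKGen, dif_pos hi, map_zero, coe_gen_e_eq_zero hi.1 hi.2]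
  | Y => exact ofAK_T_zero σ
  | Yinv =>
    have hYinv : ((gen Yinv : 𝓑) : 𝓠) * (gen Y : 𝓑) = 1 := by
      rw [← RingCon.coe_mul, gen_Yinv_mul_gen_Y, RingCon.coe_one]
    have hY : ((gen Y : 𝓑) : 𝓠) * ofAK σ (Ring.inverse (AK.T 0)) = 1 := by
      rw [← ofAK_T_zero σ, ← map_mul, Ring.mul_inverse_cancel _ hT, map_one]
    exact (left_inv_eq_right_inv hYinv hY).symm

noncomputable def quotientEquivAK (hn : 2 ≤ n) (hT : IsUnit (AK.T 0 : 𝓐)) : 𝓠 ≃ₐ[R] 𝓐 :=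
  AlgEquiv.ofAlgHom (quotientToAK σ hn hT) (ofAK σ) (quotientToAK_comp_ofAK σ hn hT)
    (RingCon.Quotient.hom_extₐ <| by
      rw [AlgHom.comp_assoc, quotientToAK_comp_mkₐ, ofAK_comp_toAK σ hn hT, AlgHom.id_comp])

end BB

open BBGen in
theorem stmt15_general {R : Type} [CommRing R] (n k : ℕ) (hn : 2 ≤ n)
    (x lam laminv δ κ κinv : R) (p pinv Acoef : ℕ → R)
    (hp : ∀ i, i ≤ k - 1 → p i * pinv i = 1) :
    (∀ i, 1 ≤ i → i ≤ n - 1 →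
      TwoSidedIdeal.span
        {(BB.gen (BBGen.e i) : BB R n k x lam laminv δ κ κinv p pinv Acoef)} =
      TwoSidedIdeal.span
        {(BB.gen (BBGen.e (n - 1)) : BB R n k x lam laminv δ κ κinv p pinv Acoef)}) ∧
    Nonempty
      ((TwoSidedIdeal.span
        {(BB.gen (BBGen.e (n - 1)) :
            BB R n k x lam laminv δ κ κinv p pinv Acoef)}).ringCon.Quotient
        ≃+* AK R n k δ p) := by
  refine ⟨fun i hi1 hi2 => BB.span_gen_e_eq hi1 hi2, ?_⟩
  obtain ⟨σ⟩ : Nonempty ({a // IsFree n a} ≃ ℕ) := nonempty_equiv_of_countable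
  have hT : IsUnit (AK.T 0 : AK R n k δ p) :=
    AK.isUnit_T_zero fun i hi => .of_mul_eq_one _ (hp i (by omega))
  exact ⟨(BB.quotientEquivAK σ hn hT).toRingEquiv⟩

open BBGen in
/-- The quotient of `BB^k_n` by the two-sided ideal `I_n` generated by `e_{n−1}`
is isomorphic to the Ariki–Koike algebra `AK^k_n`; moreover `I_n` equals the
ideal generated by any single `e_i` with `1 ≤ i ≤ n−1`. -/
theorem stmt15 {R : Type} [CommRing R] [IsDomain R] (n k : ℕ) (hn : 2 ≤ n)
    (x lam laminv δ κ κinv : R) (p pinv Acoef : ℕ → R)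
    (hx : IsUnit x) (hlam : lam * laminv = 1) (hκ : κ * κinv = 1)
    (hp : ∀ i, i ≤ k - 1 → p i * pinv i = 1)
    (hparam : (1 - x) * δ = lam - laminv) :
    (∀ i, 1 ≤ i → i ≤ n - 1 →
      TwoSidedIdeal.span
        {(BB.gen (BBGen.e i) : BB R n k x lam laminv δ κ κinv p pinv Acoef)} =
      TwoSidedIdeal.span
        {(BB.gen (BBGen.e (n - 1)) : BB R n k x lam laminv δ κ κinv p pinv Acoef)}) ∧
    Nonempty
      ((TwoSidedIdeal.span
        {(BB.gen (BBGen.e (n - 1)) :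
            BB R n k x lam laminv δ κ κinv p pinv Acoef)}).ringCon.Quotient
        ≃+* AK R n k δ p) :=
  stmt15_general n k hn x lam laminv δ κ κinv p pinv Acoef hp
end
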